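/- arXiv:math/0610559 — 5 statements merged into one kernel-verified Lean document; each statement's English description precedes it below -/
import Mathlib

section
/- Let x be a set of n points in the grid [0,n)×[0,n) with integer coordinates, exactly one in each row and column (the graph of a permutation σ), and let x' be the translate obtained by moving the unique point (m,0) to (m,n) (i.e., cyclic vertical rotation of the fundamental domain). Then J(x',x') = J(x,x) + 2m - n + 1, where J is defined from I(A,B) = #{(a,b) ∈ A×B : a1<b1, a2<b2} by J(A,B)=(I(A,B)+I(B,A))/2. -/
/-- `Ipairs A B` counts pairs `(a, b) ∈ A × B` with `a` strictly dominated by `b`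
in both coordinates. -/
def Ipairs (A B : Finset (ℚ × ℚ)) : ℕ :=
  ((A ×ˢ B).filter (fun p => p.1.1 < p.2.1 ∧ p.1.2 < p.2.2)).card

/-- `Jpairs A B = (I(A,B) + I(B,A))/2`. -/
def Jpairs (A B : Finset (ℚ × ℚ)) : ℚ :=
  ((Ipairs A B : ℚ) + (Ipairs B A : ℚ)) / 2

/-- The set of points `{(i, σ i) : 0 ≤ i < n}`, the graph of the permutation `σ`. -/
def gridPts (n : ℕ) (σ : Equiv.Perm (Fin n)) : Finset (ℚ × ℚ) :=
  Finset.univ.image (fun i : Fin n => ((i.val : ℚ), ((σ i).val : ℚ)))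

/-- The translate of the graph of `σ` obtained by moving the unique point `(m, 0)`
(where `σ m = 0`) to `(m, n)`. -/
def gridPts' (n : ℕ) (σ : Equiv.Perm (Fin n)) (m : Fin n) : Finset (ℚ × ℚ) :=
  Finset.univ.image (fun i : Fin n =>
    ((i.val : ℚ), if i = m then (n : ℚ) else ((σ i).val : ℚ)))

lemma Ipairs_image (n : ℕ) (f : Fin n → ℚ × ℚ)
    (hf : Function.Injective fun i => (f i).1) :
    Ipairs (Finset.univ.image f) (Finset.univ.image f)
      = (Finset.univ.filter (fun p : Fin n × Fin n =>
          (f p.1).1 < (f p.2).1 ∧ (f p.1).2 < (f p.2).2)).card := by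
  unfold Ipairs
  symm
  apply Finset.card_bij (fun p _ => (f p.1, f p.2))
  · intro p hp
    simp only [Finset.mem_filter, Finset.mem_univ, true_and] at hp
    simp only [Finset.mem_filter, Finset.mem_product, Finset.mem_image]
    exact ⟨⟨⟨p.1, Finset.mem_univ _, rfl⟩, ⟨p.2, Finset.mem_univ _, rfl⟩⟩, hp⟩
  · intro p hp q hq h
    simp only [Prod.mk.injEq] at h
    exact Prod.ext (hf (congrArg Prod.fst h.1)) (hf (congrArg Prod.fst h.2))
  · intro q hq
    simp only [Finset.mem_filter, Finset.mem_product, Finset.mem_image] at hq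
    obtain ⟨⟨⟨i, _, hi⟩, ⟨j, _, hj⟩⟩, hcond⟩ := hq
    refine ⟨(i, j), ?_, ?_⟩
    · simp only [Finset.mem_filter, Finset.mem_univ, true_and]
      rw [hi, hj]; exact hcond
    · simp [hi, hj]

lemma card_split {α : Type*} [DecidableEq α] (s : Finset α) (P Q : α → Prop)
    [DecidablePred P] [DecidablePred Q] (h : ∀ a, ¬(P a ∧ Q a)) :
    (s.filter (fun a => P a ∨ Q a)).card
      = (s.filter P).card + (s.filter Q).card := by
  rw [Finset.filter_or, Finset.card_union_of_disjoint]
  rw [Finset.disjoint_left]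
  intro a ha hb
  rw [Finset.mem_filter] at ha hb
  exact h a ⟨ha.2, hb.2⟩

/-- Moving the point of a permutation grid state from `(m,0)` to `(m,n)` (the cyclic
vertical rotation of the fundamental domain) changes `J(x,x)` by `2m - n + 1`. -/
theorem Jpairs_vertical_rotation (n : ℕ) (σ : Equiv.Perm (Fin n)) (m : Fin n)
    (hm : σ m = ⟨0, m.pos⟩) :
    Jpairs (gridPts' n σ m) (gridPts' n σ m)
      = Jpairs (gridPts n σ) (gridPts n σ) + 2 * (m.val : ℚ) - n + 1 := by
  have hσ0 : ∀ i : Fin n, (σ i).val = 0 ↔ i = m := by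
    intro i
    constructor
    · intro h; exact σ.injective (by rw [hm]; exact Fin.ext h)
    · intro h; rw [h, hm]
  have hinj1 : Function.Injective
      (fun i : Fin n => ((fun i : Fin n => ((i.val : ℚ), ((σ i).val : ℚ))) i).1) := by
    intro a b h
    simp only at h
    exact Fin.ext (by exact_mod_cast h)
  have hinj2 : Function.Injective
      (fun i : Fin n => ((fun i : Fin n =>
        ((i.val : ℚ), if i = m then (n : ℚ) else ((σ i).val : ℚ))) i).1) := by
    intro a b h
    simp only at h
    exact Fin.ext (by exact_mod_cast h)
  have h1 : Ipairs (gridPts n σ) (gridPts n σ)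
      = (Finset.univ.filter (fun p : Fin n × Fin n =>
          p.1.val < p.2.val ∧ (σ p.1).val < (σ p.2).val)).card := by
    rw [gridPts, Ipairs_image n _ hinj1]
    congr 1
    apply Finset.filter_congr
    intro p _
    simp only [Nat.cast_lt]
  have h2 : Ipairs (gridPts' n σ m) (gridPts' n σ m)
      = (Finset.univ.filter (fun p : Fin n × Fin n =>
          p.1.val < p.2.val ∧
          (if p.1 = m then (n : ℚ) else ((σ p.1).val : ℚ))
            < (if p.2 = m then (n : ℚ) else ((σ p.2).val : ℚ)))).card := by
    rw [gridPts', Ipairs_image n _ hinj2]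
    congr 1
    apply Finset.filter_congr
    intro p _
    simp only [Nat.cast_lt]
  -- common off-diagonal part
  set Poff : Fin n × Fin n → Prop := fun p =>
    p.1.val < p.2.val ∧ p.1 ≠ m ∧ p.2 ≠ m ∧ (σ p.1).val < (σ p.2).val with hPoff
  have hS : (Finset.univ.filter (fun p : Fin n × Fin n =>
          p.1.val < p.2.val ∧ (σ p.1).val < (σ p.2).val))
      = Finset.univ.filter (fun p : Fin n × Fin n =>
          Poff p ∨ (m.val < p.2.val ∧ p.1 = m)) := by
    apply Finset.filter_congr
    intro p _
    rw [hPoff]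
    constructor
    · rintro ⟨hlt, hv⟩
      by_cases hp1 : p.1 = m
      · right; exact ⟨hp1 ▸ hlt, hp1⟩
      · left
        refine ⟨hlt, hp1, ?_, hv⟩
        intro hp2
        rw [hp2, hm] at hv
        simp at hv
    · rintro (⟨hlt, _, _, hv⟩ | ⟨hlt, hp1⟩)
      · exact ⟨hlt, hv⟩
      · have hne : p.2 ≠ m := fun h => absurd (h ▸ hlt) (lt_irrefl _)
        have hv2 : (σ p.2).val ≠ 0 := fun h => hne ((hσ0 p.2).mp h)
        refine ⟨by rw [hp1]; exact hlt, ?_⟩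
        rw [hp1, hm]
        simpa using Nat.pos_of_ne_zero hv2
  have hS' : (Finset.univ.filter (fun p : Fin n × Fin n =>
          p.1.val < p.2.val ∧
          (if p.1 = m then (n : ℚ) else ((σ p.1).val : ℚ))
            < (if p.2 = m then (n : ℚ) else ((σ p.2).val : ℚ))))
      = Finset.univ.filter (fun p : Fin n × Fin n =>
          Poff p ∨ (p.1.val < m.val ∧ p.2 = m)) := by
    apply Finset.filter_congr
    intro p _
    rw [hPoff]
    constructor
    · rintro ⟨hlt, hv⟩
      by_cases hp2 : p.2 = m
      · right
        exact ⟨hp2 ▸ hlt, hp2⟩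
      · left
        have hp1 : p.1 ≠ m := by
          intro hp1
          rw [if_pos hp1, if_neg hp2] at hv
          have : ((σ p.2).val : ℚ) < n := by exact_mod_cast (σ p.2).isLt
          linarith
        rw [if_neg hp1, if_neg hp2] at hv
        exact ⟨hlt, hp1, hp2, by exact_mod_cast hv⟩
    · rintro (⟨hlt, hp1, hp2, hv⟩ | ⟨hlt, hp2⟩)
      · exact ⟨hlt, by rw [if_neg hp1, if_neg hp2]; exact_mod_cast hv⟩
      · have hp1 : p.1 ≠ m := fun h => absurd (h ▸ hlt) (lt_irrefl _)
        refine ⟨by rw [hp2]; exact hlt, ?_⟩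
        rw [if_neg hp1, if_pos hp2]
        exact_mod_cast (σ p.1).isLt
  -- counts of the two special parts
  have hcardQ : (Finset.univ.filter (fun p : Fin n × Fin n =>
      m.val < p.2.val ∧ p.1 = m)).card = n - 1 - m.val := by
    rw [show (Finset.univ.filter (fun p : Fin n × Fin n =>
        m.val < p.2.val ∧ p.1 = m))
        = (Finset.Ioi m).image (fun j => (m, j)) from ?_]
    · rw [Finset.card_image_of_injective _ (fun a b h => (Prod.mk.injEq _ _ _ _).mp h |>.2),
        Fin.card_Ioi]
    · ext ⟨a, b⟩
      simp only [Finset.mem_filter, Finset.mem_univ, true_and, Finset.mem_image,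
        Finset.mem_Ioi, Prod.mk.injEq]
      constructor
      · rintro ⟨hlt, rfl⟩; exact ⟨b, Fin.lt_def.mpr hlt, rfl, rfl⟩
      · rintro ⟨j, hj, rfl, rfl⟩; exact ⟨Fin.lt_def.mp hj, rfl⟩
  have hcardQ' : (Finset.univ.filter (fun p : Fin n × Fin n =>
      p.1.val < m.val ∧ p.2 = m)).card = m.val := by
    rw [show (Finset.univ.filter (fun p : Fin n × Fin n =>
        p.1.val < m.val ∧ p.2 = m))
        = (Finset.Iio m).image (fun i => (i, m)) from ?_]
    · rw [Finset.card_image_of_injective _ (fun a b h => (Prod.mk.injEq _ _ _ _).mp h |>.1),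
        Fin.card_Iio]
    · ext ⟨a, b⟩
      simp only [Finset.mem_filter, Finset.mem_univ, true_and, Finset.mem_image,
        Finset.mem_Iio, Prod.mk.injEq]
      constructor
      · rintro ⟨hlt, rfl⟩; exact ⟨a, Fin.lt_def.mpr hlt, rfl, rfl⟩
      · rintro ⟨i, hi, rfl, rfl⟩; exact ⟨Fin.lt_def.mp hi, rfl⟩
  have hsplitS : (Finset.univ.filter (fun p : Fin n × Fin n =>
        Poff p ∨ (m.val < p.2.val ∧ p.1 = m))).card
      = (Finset.univ.filter Poff).card + (n - 1 - m.val) := by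
    rw [card_split _ _ _ (fun p => by rw [hPoff]; rintro ⟨⟨_, h, _, _⟩, ⟨_, h'⟩⟩; exact h h'),
      hcardQ]
  have hsplitS' : (Finset.univ.filter (fun p : Fin n × Fin n =>
        Poff p ∨ (p.1.val < m.val ∧ p.2 = m))).card
      = (Finset.univ.filter Poff).card + m.val := by
    rw [card_split _ _ _ (fun p => by rw [hPoff]; rintro ⟨⟨_, _, h, _⟩, ⟨_, h'⟩⟩; exact h h'),
      hcardQ']
  -- finish
  unfold Jpairs
  rw [h1, h2, hS, hS', hsplitS, hsplitS']
  have hmn : m.val + 1 ≤ n := m.isLt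
  have : ((n - 1 - m.val : ℕ) : ℚ) = (n : ℚ) - 1 - m.val := by
    have : n - 1 - m.val = n - (m.val + 1) := by omega
    rw [this, Nat.cast_sub hmn]
    push_cast
    ring
  push_cast [this]
  ring
end

section
/- Let x be a grid state. The only domains p from x to x that decompose as a composition of two empty rectangles are the 2n thin annuli: the n horizontal annuli of height one and the n vertical annuli of width one through the rows and columns of the grid. Each such annulus has a unique decomposition as r₁ ∗ r₂ with r₁ ∈ Rect°(x,y), r₂ ∈ Rect°(y,x). -/
/-- A (combinatorial) rectangle on the `n × n` torus: distinct columns `a, b`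
(left/right edges) and distinct rows `c, d` (bottom/top edges), understood cyclically. -/
def GRect (n : ℕ) := {q : (ZMod n × ZMod n) × ZMod n × ZMod n // q.1.1 ≠ q.1.2 ∧ q.2.1 ≠ q.2.2}

namespace GRect
variable {n : ℕ}
def a (r : GRect n) : ZMod n := r.1.1.1
def b (r : GRect n) : ZMod n := r.1.1.2
def c (r : GRect n) : ZMod n := r.1.2.1
def d (r : GRect n) : ZMod n := r.1.2.2
end GRect

/-- The rectangle `r` connects the grid state `x` to the grid state `y`. -/
def Connects {n : ℕ} (r : GRect n) (x y : Equiv.Perm (ZMod n)) : Prop :=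
  x r.a = r.c ∧ x r.b = r.d ∧ y = x * Equiv.swap r.a r.b

/-- The grid point `(i, j)` lies in the interior of the rectangle `r` (cyclically). -/
def InteriorPt {n : ℕ} (r : GRect n) (i j : ZMod n) : Prop :=
  0 < (i - r.a).val ∧ (i - r.a).val < (r.b - r.a).val ∧
  0 < (j - r.c).val ∧ (j - r.c).val < (r.d - r.c).val

/-- The rectangle `r` is empty: no point of the grid state `x` lies in its interior. -/
def Empt {n : ℕ} (x : Equiv.Perm (ZMod n)) (r : GRect n) : Prop :=
  ∀ i : ZMod n, ¬ InteriorPt r i (x i)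

/-- The cell whose lower-left corner is `(i, j)` is contained in the rectangle `r`. -/
def CellIn {n : ℕ} (r : GRect n) (i j : ZMod n) : Prop :=
  (i - r.a).val < (r.b - r.a).val ∧ (j - r.c).val < (r.d - r.c).val

instance {n : ℕ} (r : GRect n) (i j : ZMod n) : Decidable (CellIn r i j) :=
  inferInstanceAs (Decidable (_ ∧ _))

/-- The underlying 2-chain of a rectangle: the multiplicity with which each cell
of the torus appears in it. -/
def cellsOf {n : ℕ} (r : GRect n) : ZMod n × ZMod n → ℤ :=
  fun q => if CellIn r q.1 q.2 then 1 else 0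

/-- An empty rectangle connecting `x` to `y`: `r ∈ Rect°(x,y)`. -/
def EmptyConnects {n : ℕ} (r : GRect n) (x y : Equiv.Perm (ZMod n)) : Prop :=
  Connects r x y ∧ Empt x r

/-- The decompositions of the 2-chain `p` (a domain from `x` to `z`) as a composite
`r₁ ∗ r₂` of two empty rectangles, `r₁ ∈ Rect°(x,y)`, `r₂ ∈ Rect°(y,z)`; a decomposition
records the intermediate generator `y` and the two rectangles. -/
def Decomps {n : ℕ} (x z : Equiv.Perm (ZMod n)) (p : ZMod n × ZMod n → ℤ) :
    Set (Equiv.Perm (ZMod n) × GRect n × GRect n) :=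
  {t | EmptyConnects t.2.1 x t.1 ∧ EmptyConnects t.2.2 t.1 z ∧
       (fun q => cellsOf t.2.1 q + cellsOf t.2.2 q) = p}

/-- The horizontal annulus of height one through row `c`: the union of the cells
whose row coordinate is `c`. -/
def rowAnn (n : ℕ) (c : ZMod n) : ZMod n × ZMod n → ℤ :=
  fun q => if q.2 = c then 1 else 0

/-- The vertical annulus of width one through column `c`. -/
def colAnn (n : ℕ) (c : ZMod n) : ZMod n × ZMod n → ℤ :=
  fun q => if q.1 = c then 1 else 0

/-!
If `r₁ ∈ Rect°(x, y)` and `r₂ ∈ Rect°(y, x)`, then `x * swap r₁.a r₁.b * swap r₂.a r₂.b = x`,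
so the two transpositions agree and `r₂` has the same two corners as `r₁`. Hence `r₂` either
shares the columns of `r₁` with the row range flipped, and `r₁ ∗ r₂` is the vertical annulus
spanned by those columns, or it shares the rows with the column range flipped, giving a horizontal
annulus. Emptiness makes the annulus thin: a column `i` strictly between the two columns carries
the point `(i, x i)` of both `x` and `y`, which lies strictly inside `r₁` or `r₂`; rows are handled
through `x⁻¹`. Conversely each thin annulus splits in this way, and its two columns (rows) pin down
the split.
-/

section Arc

variable {n : ℕ}

/-- `(u - c).val < (d - c).val` says that `u` lies on the half-open arc `[c, d)` of the cycle
`ZMod n` running upwards from `c`; `ArcInterior c d u` also excludes the endpoint `c`. -/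
def ArcInterior (c d u : ZMod n) : Prop := 0 < (u - c).val ∧ (u - c).val < (d - c).val

lemma ArcInterior.ne_left {c d u : ZMod n} (h : ArcInterior c d u) : u ≠ c := by
  rintro rfl
  simpa using h.1

lemma ArcInterior.ne_right {c d u : ZMod n} (h : ArcInterior c d u) : u ≠ d := by
  rintro rfl
  exact lt_irrefl _ h.2

lemma val_sub_pos {u c : ZMod n} (h : u ≠ c) : 0 < (u - c).val :=
  ZMod.val_pos.mpr (sub_ne_zero.mpr h)

lemma val_sub_lt_one_iff {u c : ZMod n} : (u - c).val < 1 ↔ u = c := by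
  rw [Nat.lt_one_iff, ZMod.val_eq_zero, sub_eq_zero]

lemma val_one_of_ne {c d : ZMod n} (h : c ≠ d) : (1 : ZMod n).val = 1 :=
  ZMod.val_one'' (ZMod.nontrivial_iff.mp ⟨c, d, h⟩)

lemma not_arcInterior_add_one (c u : ZMod n) : ¬ ArcInterior c (c + 1) u := by
  rintro ⟨hpos, hlt⟩
  rw [add_sub_cancel_left, ZMod.val_one_eq_one_mod] at hlt
  have := Nat.mod_le 1 n
  omega

variable [NeZero n]

lemma eq_add_one_of_forall_not_arcInterior {c d : ZMod n} (h : c ≠ d)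
    (hempty : ∀ u, ¬ ArcInterior c d u) : d = c + 1 := by
  have h1 := val_one_of_ne h
  have hval : (d - c).val = 1 := by
    by_contra hne
    have hpos := val_sub_pos h.symm
    exact hempty (c + 1) ⟨by simp [h1], by rw [add_sub_cancel_left, h1]; omega⟩
  exact sub_eq_iff_eq_add'.mp (ZMod.val_injective n (hval.trans h1.symm))

/-- The arcs `[c, d)` and `[d, c)` partition the cycle. -/
lemma val_sub_lt_val_sub_iff_not {c d : ZMod n} (h : c ≠ d) (u : ZMod n) :
    (u - c).val < (d - c).val ↔ ¬ (u - d).val < (c - d).val := by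
  have hdc : d - c ≠ 0 := sub_ne_zero.mpr h.symm
  rw [show u - d = (u - c) - (d - c) by ring, show c - d = -(d - c) by ring, ZMod.neg_val,
    if_neg hdc]
  set s := u - c
  set t := d - c
  have hs := ZMod.val_lt s
  rcases le_or_gt t.val s.val with hts | hst
  · rw [ZMod.val_sub hts]
    omega
  · have hts : t - s ≠ 0 := fun h0 => hst.ne' (by rw [sub_eq_zero.mp h0])
    rw [show s - t = -(t - s) by ring, ZMod.neg_val, if_neg hts, ZMod.val_sub hst.le]
    omega

lemma arcInterior_or_arcInterior {c d u : ZMod n} (h : c ≠ d) (hc : u ≠ c) (hd : u ≠ d) :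
    ArcInterior c d u ∨ ArcInterior d c u := by
  by_cases hu : (u - c).val < (d - c).val
  · exact Or.inl ⟨val_sub_pos hc, hu⟩
  · exact Or.inr ⟨val_sub_pos hd, not_not.mp ((val_sub_lt_val_sub_iff_not h u).not.mp hu)⟩

end Arc

namespace GRect

variable {n : ℕ}

lemma a_ne_b (r : GRect n) : r.a ≠ r.b := r.2.1

lemma c_ne_d (r : GRect n) : r.c ≠ r.d := r.2.2

lemma ext {r s : GRect n} (ha : r.a = s.a) (hb : r.b = s.b) (hc : r.c = s.c) (hd : r.d = s.d) :
    r = s :=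
  Subtype.ext (Prod.ext (Prod.ext ha hb) (Prod.ext hc hd))

/-- The complement of `r` in the vertical annulus spanned by its columns. -/
def flipRows (r : GRect n) : GRect n := ⟨((r.a, r.b), (r.d, r.c)), r.a_ne_b, r.c_ne_d.symm⟩

def flipCols (r : GRect n) : GRect n := ⟨((r.b, r.a), (r.c, r.d)), r.a_ne_b.symm, r.c_ne_d⟩

end GRect

open Equiv

variable {n : ℕ}

lemma interiorPt_iff {r : GRect n} {i j : ZMod n} :
    InteriorPt r i j ↔ ArcInterior r.a r.b i ∧ ArcInterior r.c r.d j :=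
  and_assoc.symm

lemma empt_of_b_eq_a_add_one {r : GRect n} (h : r.b = r.a + 1) (x : Perm (ZMod n)) : Empt x r :=
  fun i hi => not_arcInterior_add_one r.a i (h ▸ (interiorPt_iff.mp hi).1)

lemma empt_of_d_eq_c_add_one {r : GRect n} (h : r.d = r.c + 1) (x : Perm (ZMod n)) : Empt x r :=
  fun i hi => not_arcInterior_add_one r.c (x i) (h ▸ (interiorPt_iff.mp hi).2)

lemma Connects.flipRows {r : GRect n} {x y : Perm (ZMod n)} (h : Connects r x y) :
    Connects r.flipRows y x := by
  obtain ⟨hc, hd, rfl⟩ := h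
  refine ⟨?_, ?_, ?_⟩
  · show (x * swap r.a r.b) r.a = r.d
    rw [Perm.mul_apply, swap_apply_left, hd]
  · show (x * swap r.a r.b) r.b = r.c
    rw [Perm.mul_apply, swap_apply_right, hc]
  · show x = x * swap r.a r.b * swap r.a r.b
    rw [mul_assoc, swap_mul_self, mul_one]

lemma Connects.flipCols {r : GRect n} {x y : Perm (ZMod n)} (h : Connects r x y) :
    Connects r.flipCols y x := by
  obtain ⟨hc, hd, rfl⟩ := h
  refine ⟨?_, ?_, ?_⟩
  · show (x * swap r.a r.b) r.b = r.c
    rw [Perm.mul_apply, swap_apply_right, hc]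
  · show (x * swap r.a r.b) r.a = r.d
    rw [Perm.mul_apply, swap_apply_left, hd]
  · show x = x * swap r.a r.b * swap r.b r.a
    rw [swap_comm r.b, mul_assoc, swap_mul_self, mul_one]

lemma eq_flipRows_or_eq_flipCols {r₁ r₂ : GRect n} {x y : Perm (ZMod n)}
    (h₁ : Connects r₁ x y) (h₂ : Connects r₂ y x) : r₂ = r₁.flipRows ∨ r₂ = r₁.flipCols := by
  obtain ⟨hc₁, hd₁, rfl⟩ := h₁
  obtain ⟨hc₂, hd₂, hx⟩ := h₂
  have hswap : swap r₁.a r₁.b = swap r₂.a r₂.b := by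
    rwa [mul_assoc, eq_comm, mul_eq_left, mul_eq_one_iff_eq_inv, swap_inv] at hx
  have hb₂ : r₂.b = swap r₁.a r₁.b r₂.a := by rw [hswap, swap_apply_left]
  rw [swap_apply_def] at hb₂
  split_ifs at hb₂ with ha ha'
  · left
    have hc : r₂.c = r₁.d := by rw [← hc₂, Perm.mul_apply, ha, swap_apply_left, hd₁]
    have hd : r₂.d = r₁.c := by rw [← hd₂, Perm.mul_apply, hb₂, swap_apply_right, hc₁]
    exact GRect.ext ha hb₂ hc hd
  · right
    have hc : r₂.c = r₁.c := by rw [← hc₂, Perm.mul_apply, ha', swap_apply_right, hc₁]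
    have hd : r₂.d = r₁.d := by rw [← hd₂, Perm.mul_apply, hb₂, swap_apply_left, hd₁]
    exact GRect.ext ha' hb₂ hc hd
  · exact absurd hb₂.symm r₂.a_ne_b

section Width

variable [NeZero n] {r : GRect n} {x : Perm (ZMod n)}

lemma b_eq_a_add_one_of_empt_flipRows (hc : x r.a = r.c) (hd : x r.b = r.d) (h₁ : Empt x r)
    (h₂ : Empt (x * swap r.a r.b) r.flipRows) : r.b = r.a + 1 := by
  refine eq_add_one_of_forall_not_arcInterior r.a_ne_b fun i hi => ?_
  have hxi : (x * swap r.a r.b) i = x i := by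
    rw [Perm.mul_apply, swap_apply_of_ne_of_ne hi.ne_left hi.ne_right]
  rcases arcInterior_or_arcInterior r.c_ne_d (hc ▸ x.injective.ne hi.ne_left)
      (hd ▸ x.injective.ne hi.ne_right) with h | h
  · exact h₁ i (interiorPt_iff.mpr ⟨hi, h⟩)
  · exact h₂ i (hxi ▸ interiorPt_iff.mpr ⟨hi, h⟩)

lemma d_eq_c_add_one_of_empt_flipCols (hc : x r.a = r.c) (hd : x r.b = r.d) (h₁ : Empt x r)
    (h₂ : Empt (x * swap r.a r.b) r.flipCols) : r.d = r.c + 1 := by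
  refine eq_add_one_of_forall_not_arcInterior r.c_ne_d fun j hj => ?_
  have hxj : x (x.symm j) = j := x.apply_symm_apply j
  have ha : x.symm j ≠ r.a := fun h => hj.ne_left (by rw [← hxj, h, hc])
  have hb : x.symm j ≠ r.b := fun h => hj.ne_right (by rw [← hxj, h, hd])
  have hyj : (x * swap r.a r.b) (x.symm j) = j := by
    rw [Perm.mul_apply, swap_apply_of_ne_of_ne ha hb, hxj]
  rcases arcInterior_or_arcInterior r.a_ne_b ha hb with h | h
  · exact h₁ (x.symm j) (by rw [hxj]; exact interiorPt_iff.mpr ⟨h, hj⟩)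
  · exact h₂ (x.symm j) (by rw [hyj]; exact interiorPt_iff.mpr ⟨h, hj⟩)

end Width

lemma ite_and_add_ite_and {A B B' : Prop} [Decidable A] [Decidable B] [Decidable B']
    (h : B ↔ ¬ B') :
    ((if A ∧ B then 1 else 0) + if A ∧ B' then 1 else 0 : ℤ) = if A then 1 else 0 := by
  by_cases hA : A <;> by_cases hB : B <;> simp_all

lemma ite_and_add_ite_and' {A B B' : Prop} [Decidable A] [Decidable B] [Decidable B']
    (h : B ↔ ¬ B') :
    ((if B ∧ A then 1 else 0) + if B' ∧ A then 1 else 0 : ℤ) = if A then 1 else 0 := by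
  simpa only [and_comm] using ite_and_add_ite_and (A := A) h

section Cells

variable [NeZero n] (r : GRect n) (q : ZMod n × ZMod n)

lemma cellsOf_add_cellsOf_flipRows :
    cellsOf r q + cellsOf r.flipRows q = if (q.1 - r.a).val < (r.b - r.a).val then 1 else 0 :=
  ite_and_add_ite_and (val_sub_lt_val_sub_iff_not r.c_ne_d q.2)

lemma cellsOf_add_cellsOf_flipCols :
    cellsOf r q + cellsOf r.flipCols q = if (q.2 - r.c).val < (r.d - r.c).val then 1 else 0 :=
  ite_and_add_ite_and' (val_sub_lt_val_sub_iff_not r.a_ne_b q.1)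

end Cells

lemma rowAnn_injective : Function.Injective (rowAnn n) := by
  intro c c' h
  simpa [rowAnn] using congrFun h (0, c)

lemma colAnn_injective : Function.Injective (colAnn n) := by
  intro a a' h
  simpa [colAnn] using congrFun h (a, 0)

section Annuli

variable [Fact (1 < n)]

lemma colAnn_ne_rowAnn (a c : ZMod n) : colAnn n a ≠ rowAnn n c := fun h => by
  simpa [colAnn, rowAnn] using congrFun h (a, c + 1)

lemma ncard_range_rowAnn_union_range_colAnn :
    (Set.range (rowAnn n) ∪ Set.range (colAnn n)).ncard = 2 * n := by
  have hdisj : Disjoint (Set.range (rowAnn n)) (Set.range (colAnn n)) := by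
    rw [Set.disjoint_left]
    rintro _ ⟨c, rfl⟩ ⟨a, h⟩
    exact colAnn_ne_rowAnn a c h
  rw [Set.ncard_union_eq hdisj (Set.finite_range _) (Set.finite_range _),
    Set.ncard_range_of_injective rowAnn_injective, Set.ncard_range_of_injective colAnn_injective,
    Nat.card_zmod, two_mul]

lemma val_sub_lt_val_add_one_sub_iff {u c : ZMod n} : (u - c).val < (c + 1 - c).val ↔ u = c := by
  rw [add_sub_cancel_left, ZMod.val_one, val_sub_lt_one_iff]

def colRect (x : Perm (ZMod n)) (a : ZMod n) : GRect n :=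
  ⟨((a, a + 1), (x a, x (a + 1))), (succ_ne_self a).symm, x.injective.ne (succ_ne_self a).symm⟩

def rowRect (x : Perm (ZMod n)) (c : ZMod n) : GRect n :=
  ⟨((x.symm c, x.symm (c + 1)), (c, c + 1)), x.symm.injective.ne (succ_ne_self c).symm,
    (succ_ne_self c).symm⟩

def colDecomp (x : Perm (ZMod n)) (a : ZMod n) : Perm (ZMod n) × GRect n × GRect n :=
  (x * swap a (a + 1), colRect x a, (colRect x a).flipRows)

def rowDecomp (x : Perm (ZMod n)) (c : ZMod n) : Perm (ZMod n) × GRect n × GRect n :=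
  (x * swap (x.symm c) (x.symm (c + 1)), rowRect x c, (rowRect x c).flipCols)

lemma colDecomp_mem_decomps (x : Perm (ZMod n)) (a : ZMod n) :
    colDecomp x a ∈ Decomps x x (colAnn n a) := by
  have hr : Connects (colRect x a) x (x * swap a (a + 1)) := ⟨rfl, rfl, rfl⟩
  refine ⟨⟨hr, empt_of_b_eq_a_add_one rfl x⟩, ⟨hr.flipRows, empt_of_b_eq_a_add_one rfl _⟩, ?_⟩
  funext q
  exact (cellsOf_add_cellsOf_flipRows _ q).trans
    (if_congr val_sub_lt_val_add_one_sub_iff rfl rfl)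

lemma rowDecomp_mem_decomps (x : Perm (ZMod n)) (c : ZMod n) :
    rowDecomp x c ∈ Decomps x x (rowAnn n c) := by
  have hr : Connects (rowRect x c) x (x * swap (x.symm c) (x.symm (c + 1))) :=
    ⟨x.apply_symm_apply c, x.apply_symm_apply (c + 1), rfl⟩
  refine ⟨⟨hr, empt_of_d_eq_c_add_one rfl x⟩, ⟨hr.flipCols, empt_of_d_eq_c_add_one rfl _⟩, ?_⟩
  funext q
  exact (cellsOf_add_cellsOf_flipCols _ q).trans
    (if_congr val_sub_lt_val_add_one_sub_iff rfl rfl)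

lemma eq_colDecomp_or_eq_rowDecomp {x : Perm (ZMod n)} {p : ZMod n × ZMod n → ℤ}
    {t : Perm (ZMod n) × GRect n × GRect n} (ht : t ∈ Decomps x x p) :
    (∃ a, t = colDecomp x a) ∨ ∃ c, t = rowDecomp x c := by
  obtain ⟨y, r₁, r₂⟩ := t
  obtain ⟨⟨hr₁, he₁⟩, ⟨hr₂, he₂⟩, -⟩ : EmptyConnects r₁ x y ∧ EmptyConnects r₂ y x ∧ _ := ht
  rcases eq_flipRows_or_eq_flipCols hr₁ hr₂ with rfl | rfl
  · obtain ⟨hc, hd, rfl⟩ := hr₁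
    have hb := b_eq_a_add_one_of_empt_flipRows hc hd he₁ he₂
    have hr : r₁ = colRect x r₁.a := GRect.ext rfl hb hc.symm (by rw [← hd, hb]; rfl)
    exact Or.inl ⟨r₁.a, by rw [colDecomp, ← hr, hb]⟩
  · obtain ⟨hc, hd, rfl⟩ := hr₁
    have hd' := d_eq_c_add_one_of_empt_flipCols hc hd he₁ he₂
    have ha : r₁.a = x.symm r₁.c := x.eq_symm_apply.mpr hc
    have hb : r₁.b = x.symm (r₁.c + 1) := x.eq_symm_apply.mpr (hd.trans hd')
    have hr : r₁ = rowRect x r₁.c := GRect.ext ha hb rfl hd'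
    exact Or.inr ⟨r₁.c, by rw [rowDecomp, ← hr, ha, hb]⟩

lemma eq_colAnn_or_eq_rowAnn {x : Perm (ZMod n)} {p : ZMod n × ZMod n → ℤ}
    (hp : (Decomps x x p).Nonempty) : (∃ a, p = colAnn n a) ∨ ∃ c, p = rowAnn n c := by
  obtain ⟨t, ht⟩ := hp
  rcases eq_colDecomp_or_eq_rowDecomp ht with ⟨a, rfl⟩ | ⟨c, rfl⟩
  · exact Or.inl ⟨a, ht.2.2.symm.trans (colDecomp_mem_decomps x a).2.2⟩
  · exact Or.inr ⟨c, ht.2.2.symm.trans (rowDecomp_mem_decomps x c).2.2⟩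

lemma decomps_colAnn (x : Perm (ZMod n)) (a : ZMod n) :
    Decomps x x (colAnn n a) = {colDecomp x a} := by
  refine Set.eq_singleton_iff_unique_mem.mpr ⟨colDecomp_mem_decomps x a, fun t ht => ?_⟩
  rcases eq_colDecomp_or_eq_rowDecomp ht with ⟨a', rfl⟩ | ⟨c, rfl⟩
  · rw [colAnn_injective (ht.2.2.symm.trans (colDecomp_mem_decomps x a').2.2)]
  · exact absurd (ht.2.2.symm.trans (rowDecomp_mem_decomps x c).2.2) (colAnn_ne_rowAnn a c)

lemma decomps_rowAnn (x : Perm (ZMod n)) (c : ZMod n) :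
    Decomps x x (rowAnn n c) = {rowDecomp x c} := by
  refine Set.eq_singleton_iff_unique_mem.mpr ⟨rowDecomp_mem_decomps x c, fun t ht => ?_⟩
  rcases eq_colDecomp_or_eq_rowDecomp ht with ⟨a, rfl⟩ | ⟨c', rfl⟩
  · exact absurd (ht.2.2.symm.trans (colDecomp_mem_decomps x a).2.2).symm
      (colAnn_ne_rowAnn a c)
  · rw [rowAnn_injective (ht.2.2.symm.trans (rowDecomp_mem_decomps x c').2.2)]

end Annuli

theorem Decomps_self_general (n : ℕ) (hn : 2 ≤ n) (x : Equiv.Perm (ZMod n)) :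
    {p : ZMod n × ZMod n → ℤ | (Decomps x x p).Nonempty}
        = Set.range (rowAnn n) ∪ Set.range (colAnn n) ∧
    (Set.range (rowAnn n) ∪ Set.range (colAnn n)).ncard = 2 * n ∧
    (∀ p, (Decomps x x p).Nonempty → (Decomps x x p).ncard = 1) := by
  have : Fact (1 < n) := ⟨hn⟩
  refine ⟨Set.Subset.antisymm ?_ ?_, ncard_range_rowAnn_union_range_colAnn, fun p hp => ?_⟩
  · intro p hp
    rcases eq_colAnn_or_eq_rowAnn hp with ⟨a, rfl⟩ | ⟨c, rfl⟩
    exacts [Or.inr ⟨a, rfl⟩, Or.inl ⟨c, rfl⟩]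
  · rintro _ (⟨c, rfl⟩ | ⟨a, rfl⟩)
    · exact ⟨_, rowDecomp_mem_decomps x c⟩
    · exact ⟨_, colDecomp_mem_decomps x a⟩
  · rcases eq_colAnn_or_eq_rowAnn hp with ⟨a, rfl⟩ | ⟨c, rfl⟩
    · rw [decomps_colAnn, Set.ncard_singleton]
    · rw [decomps_rowAnn, Set.ncard_singleton]

/-- For a grid state `x`, the only domains from `x` to itself decomposing as a composite
of two empty rectangles are the `2n` thin annuli (the `n` horizontal annuli of height one
and the `n` vertical annuli of width one), and each of them admits exactly one such
decomposition. -/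
theorem Decomps_self (n : ℕ) [NeZero n] (hn : 2 ≤ n) (x : Equiv.Perm (ZMod n)) :
    {p : ZMod n × ZMod n → ℤ | (Decomps x x p).Nonempty}
        = Set.range (rowAnn n) ∪ Set.range (colAnn n) ∧
    (Set.range (rowAnn n) ∪ Set.range (colAnn n)).ncard = 2 * n ∧
    (∀ p, (Decomps x x p).Nonempty → (Decomps x x p).ncard = 1) :=
  Decomps_self_general n hn x
end

section
/- The endomorphism ∂⁻ of the free 𝔽₂[U₁,...,U_n]-module generated by grid states, defined by ∂⁻(x) = Σ_y Σ_{r ∈ Rect°(x,y)} U₁^{O₁(r)}···U_n^{O_n(r)} · y, satisfies ∂⁻ ∘ ∂⁻ = 0. -/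
instance {n : ℕ} [NeZero n] : Fintype (GRect n) :=
  inferInstanceAs (Fintype {q : (ZMod n × ZMod n) × ZMod n × ZMod n // q.1.1 ≠ q.1.2 ∧ q.2.1 ≠ q.2.2})

instance {n : ℕ} : DecidableEq (GRect n) :=
  inferInstanceAs (DecidableEq {q : (ZMod n × ZMod n) × ZMod n × ZMod n // q.1.1 ≠ q.1.2 ∧ q.2.1 ≠ q.2.2})

/-- `r` is an empty rectangle starting at `x` (and ending at `x ∘ (a b)`):
`r ∈ Rect°(x, x * swap a b)`. -/
def Hits {n : ℕ} (x : Equiv.Perm (ZMod n)) (r : GRect n) : Prop :=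
  x r.a = r.c ∧ x r.b = r.d ∧ Empt x r

instance {n : ℕ} [NeZero n] (x : Equiv.Perm (ZMod n)) (r : GRect n) :
    Decidable (Hits x r) := by
  unfold Hits Empt InteriorPt; infer_instance

/-- The terminal grid state of a rectangle starting at `x`. -/
def next {n : ℕ} (x : Equiv.Perm (ZMod n)) (r : GRect n) : Equiv.Perm (ZMod n) :=
  x * Equiv.swap r.a r.b

/-- The exponent `O_i(r)` of `U_i` for the rectangle `r`: `1` if the `O`-marking in
column `i` (in the cell `(i, τ i)`) lies in `r`, and `0` otherwise. -/
def Owt {n : ℕ} (τ : Equiv.Perm (ZMod n)) (r : GRect n) : ZMod n → ℕ :=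
  fun i => if CellIn r i (τ i) then 1 else 0

/-- The basis of the grid complex `C⁻(G)` as a module over the ground field:
a pair of a grid state `x` and a monomial `U₁^{m₁} ⋯ U_n^{m_n}`. -/
abbrev GBasis (n : ℕ) := Equiv.Perm (ZMod n) × (ZMod n → ℕ)

/-- The grid complex `C⁻(G)` with coefficients in `𝔽₂`, i.e. the free
`𝔽₂[U₁,…,U_n]`-module on the grid states, presented with basis the pairs
(grid state, `U`-monomial). -/
abbrev GC (n : ℕ) := GBasis n →₀ ZMod 2

/-- The differential
`∂⁻(x) = Σ_y Σ_{r ∈ Rect°(x,y)} U₁^{O₁(r)} ⋯ U_n^{O_n(r)} · y` of the grid complex,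
with coefficients in `𝔽₂`. -/
noncomputable def delta {n : ℕ} [NeZero n] (τ : Equiv.Perm (ZMod n)) (f : GC n) : GC n :=
  f.sum fun b cf =>
    ∑ r : GRect n,
      if Hits b.1 r then
        Finsupp.single (next b.1 r, fun i => b.2 i + Owt τ r i) cf
      else 0


-- ===================== auxiliary development =====================
set_option linter.unusedSectionVars false
set_option linter.unusedVariables false
set_option maxHeartbeats 1000000

section Base
variable {n : ℕ}
def Vv {n : ℕ} (u v : ZMod n) : ℕ := (v - u).val
variable [NeZero n]
lemma Vv_lt (u v : ZMod n) : Vv u v < n := ZMod.val_lt _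
lemma Vv_self (u : ZMod n) : Vv u u = 0 := by simp [Vv]
lemma Vv_eq_zero {u v : ZMod n} : Vv u v = 0 ↔ u = v := by
  rw [Vv, ZMod.val_eq_zero, sub_eq_zero, eq_comm]
lemma Vv_ne {u v : ZMod n} (h : u ≠ v) : Vv u v ≠ 0 := fun h0 => h (Vv_eq_zero.1 h0)
lemma Vv_inj {u v w : ZMod n} (h : Vv u v = Vv u w) : v = w := by
  have := ZMod.val_injective n h
  have h2 : v - u + u = w - u + u := by rw [this]
  simpa using h2
lemma Vv_rel (w u v : ZMod n) :
    Vv u v + Vv w u = Vv w v ∨ Vv u v + Vv w u = Vv w v + n := by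
  have h : v - w = (v - u) + (u - w) := by ring
  have h2 : Vv w v = (Vv u v + Vv w u) % n := by rw [Vv, h, ZMod.val_add]; rfl
  rcases Nat.lt_or_ge (Vv u v + Vv w u) n with hlt | hge
  · left; rw [h2, Nat.mod_eq_of_lt hlt]
  · right
    have b1 := Vv_lt u v; have b2 := Vv_lt w u
    have h3 : Vv u v + Vv w u - n < n := by omega
    rw [h2, Nat.mod_eq_sub_mod hge, Nat.mod_eq_of_lt h3]; omega
lemma Vv_comm {u v : ZMod n} (h : u ≠ v) : Vv u v + Vv v u = n := by
  rcases Vv_rel v u v with h1 | h1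
  · rw [Vv_self] at h1
    exact absurd (Vv_eq_zero.1 (by omega)) h
  · rw [Vv_self] at h1; omega
lemma one_lt_n {u v : ZMod n} (h : u ≠ v) : 1 < n := by
  rcases Nat.lt_or_ge 1 n with h1 | h1
  · exact h1
  · exfalso
    have hn := Nat.pos_of_ne_zero (NeZero.ne n)
    interval_cases n
    · exact h (Subsingleton.elim u v)
lemma Vv_succ (hn : 1 < n) (u : ZMod n) : Vv u (u + 1) = 1 := by
  haveI : Fact (1 < n) := ⟨hn⟩
  simp [Vv, ZMod.val_one]
lemma succ_ne (hn : 1 < n) (u : ZMod n) : u ≠ u + 1 := by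
  intro h
  have := Vv_succ hn u
  rw [← h, Vv_self] at this; omega
end Base

abbrev QQ (n : ℕ) := (ZMod n × ZMod n) × ZMod n × ZMod n

section Defs
variable {n : ℕ}
def intP (q : QQ n) (i j : ZMod n) : Prop :=
  0 < Vv q.1.1 i ∧ Vv q.1.1 i < Vv q.1.1 q.1.2 ∧ 0 < Vv q.2.1 j ∧ Vv q.2.1 j < Vv q.2.1 q.2.2
def cellP (q : QQ n) (i j : ZMod n) : Prop :=
  Vv q.1.1 i < Vv q.1.1 q.1.2 ∧ Vv q.2.1 j < Vv q.2.1 q.2.2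
instance (q : QQ n) (i j : ZMod n) : Decidable (cellP q i j) :=
  inferInstanceAs (Decidable (_ ∧ _))
instance (q : QQ n) (i j : ZMod n) : Decidable (intP q i j) :=
  inferInstanceAs (Decidable (_ ∧ _))
lemma intP_mk (a b c d i j : ZMod n) :
    intP ((a,b),(c,d)) i j ↔
      (0 < Vv a i ∧ Vv a i < Vv a b ∧ 0 < Vv c j ∧ Vv c j < Vv c d) := Iff.rfl
lemma cellP_mk (a b c d i j : ZMod n) :
    cellP ((a,b),(c,d)) i j ↔ (Vv a i < Vv a b ∧ Vv c j < Vv c d) := Iff.rfl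

def hitsP (x : Equiv.Perm (ZMod n)) (q : QQ n) : Prop :=
  q.1.1 ≠ q.1.2 ∧ q.2.1 ≠ q.2.2 ∧ x q.1.1 = q.2.1 ∧ x q.1.2 = q.2.2 ∧
    ∀ i, ¬ intP q i (x i)
instance [NeZero n] (x : Equiv.Perm (ZMod n)) (q : QQ n) : Decidable (hitsP x q) := by
  unfold hitsP; infer_instance
def nxtP (x : Equiv.Perm (ZMod n)) (q : QQ n) : Equiv.Perm (ZMod n) :=
  x * Equiv.swap q.1.1 q.1.2
def owtP (τ : Equiv.Perm (ZMod n)) (q : QQ n) (i : ZMod n) : ℕ :=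
  if cellP q i (τ i) then 1 else 0
def validP [NeZero n] (x : Equiv.Perm (ZMod n)) (p : QQ n × QQ n) : Prop :=
  hitsP x p.1 ∧ hitsP (nxtP x p.1) p.2
instance [NeZero n] (x : Equiv.Perm (ZMod n)) (p : QQ n × QQ n) : Decidable (validP x p) := by
  unfold validP; infer_instance

def phiT [NeZero n] (x τ : Equiv.Perm (ZMod n)) (p : QQ n × QQ n) : QQ n × QQ n :=
  if p.2.1.1 = p.1.1.1 ∧ p.2.1.2 = p.1.1.2 then
    (((x.symm (τ p.1.1.1), x.symm (τ p.1.1.1 + 1)), (τ p.1.1.1, τ p.1.1.1 + 1)),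
     ((x.symm (τ p.1.1.1 + 1), x.symm (τ p.1.1.1)), (τ p.1.1.1, τ p.1.1.1 + 1)))
  else if p.2.1.1 = p.1.1.2 ∧ p.2.1.2 = p.1.1.1 then
    (((τ.symm p.1.2.1, τ.symm p.1.2.1 + 1), (x (τ.symm p.1.2.1), x (τ.symm p.1.2.1 + 1))),
     ((τ.symm p.1.2.1, τ.symm p.1.2.1 + 1), (x (τ.symm p.1.2.1 + 1), x (τ.symm p.1.2.1))))
  else if p.2.1.1 = p.1.1.2 then
    (if Vv p.1.2.1 p.1.2.2 < Vv p.1.2.1 p.2.2.2 then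
      (((p.1.1.2, p.2.1.2), (p.1.2.2, p.2.2.2)), ((p.1.1.1, p.2.1.2), (p.1.2.1, p.1.2.2)))
     else
      (((p.1.1.1, p.2.1.2), (p.1.2.1, p.2.2.2)), ((p.1.1.1, p.1.1.2), (p.2.2.2, p.1.2.2))))
  else if p.2.1.2 = p.1.1.1 then
    (if Vv p.2.2.1 p.1.2.1 < Vv p.2.2.1 p.1.2.2 then
      (((p.2.1.1, p.1.1.1), (p.2.2.1, p.1.2.1)), ((p.2.1.1, p.1.1.2), (p.1.2.1, p.1.2.2)))
     else
      (((p.2.1.1, p.1.1.2), (p.2.2.1, p.1.2.2)), ((p.1.1.1, p.1.1.2), (p.1.2.1, p.2.2.1))))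
  else if p.2.1.1 = p.1.1.1 then
    (if Vv p.1.1.1 p.1.1.2 < Vv p.1.1.1 p.2.1.2 then
      (((p.1.1.2, p.2.1.2), (p.1.2.2, p.2.2.2)), ((p.1.1.1, p.1.1.2), (p.1.2.1, p.2.2.2)))
     else
      (((p.1.1.1, p.2.1.2), (p.1.2.1, p.2.2.2)), ((p.2.1.2, p.1.1.2), (p.1.2.1, p.1.2.2))))
  else if p.2.1.2 = p.1.1.2 then
    (if Vv p.2.1.1 p.1.1.1 < Vv p.2.1.1 p.1.1.2 then
      (((p.2.1.1, p.1.1.1), (p.2.2.1, p.1.2.1)), ((p.1.1.1, p.1.1.2), (p.2.2.1, p.1.2.2)))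
     else
      (((p.2.1.1, p.1.1.2), (p.2.2.1, p.1.2.2)), ((p.1.1.1, p.2.1.1), (p.1.2.1, p.1.2.2))))
  else (p.2, p.1)

lemma mulswap_left (x : Equiv.Perm (ZMod n)) (u v : ZMod n) :
    (x * Equiv.swap u v) u = x v := by
  simp [Equiv.Perm.mul_apply]
lemma mulswap_right (x : Equiv.Perm (ZMod n)) (u v : ZMod n) :
    (x * Equiv.swap u v) v = x u := by
  simp [Equiv.Perm.mul_apply]
lemma mulswap_other (x : Equiv.Perm (ZMod n)) {u v i : ZMod n} (hu : i ≠ u) (hv : i ≠ v) :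
    (x * Equiv.swap u v) i = x i := by
  simp [Equiv.Perm.mul_apply, Equiv.swap_apply_of_ne_of_ne hu hv]

lemma empt_swap_intro (x : Equiv.Perm (ZMod n)) (u v : ZMod n) (q : QQ n)
    (hg : ∀ i, i ≠ u → i ≠ v → ¬ intP q i (x i))
    (hu : ¬ intP q u (x v)) (hv : ¬ intP q v (x u)) :
    ∀ i, ¬ intP q i ((x * Equiv.swap u v) i) := by
  intro i
  rcases eq_or_ne i u with rfl | hiu
  · rwa [mulswap_left]
  rcases eq_or_ne i v with rfl | hiv
  · rwa [mulswap_right]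
  · rw [mulswap_other x hiu hiv]; exact hg i hiu hiv
end Defs

section Swaps
variable {α : Type*} [DecidableEq α]
lemma cyc_12 {u v w : α} (h1 : u ≠ v) (h2 : v ≠ w) (h3 : u ≠ w) :
    Equiv.swap u v * Equiv.swap v w = Equiv.swap v w * Equiv.swap u w := by
  ext i
  simp only [Equiv.Perm.mul_apply, Equiv.swap_apply_def]
  split_ifs <;> grind
lemma cyc_13 {u v w : α} (h1 : u ≠ v) (h2 : v ≠ w) (h3 : u ≠ w) :
    Equiv.swap u v * Equiv.swap v w = Equiv.swap u w * Equiv.swap u v := by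
  ext i
  simp only [Equiv.Perm.mul_apply, Equiv.swap_apply_def]
  split_ifs <;> grind
lemma swap_disj {a b A B : α} (h1 : A ≠ a) (h2 : A ≠ b) (h3 : B ≠ a) (h4 : B ≠ b) :
    Equiv.swap a b * Equiv.swap A B = Equiv.swap A B * Equiv.swap a b := by
  ext i
  simp only [Equiv.Perm.mul_apply, Equiv.swap_apply_def]
  split_ifs <;> grind
end Swaps
section SpecV
variable {n : ℕ} [NeZero n]

lemma specV (x τ : Equiv.Perm (ZMod n)) (a b c d : ZMod n)
    (hab : a ≠ b) (hcd : c ≠ d) (hxa : x a = c) (hxb : x b = d)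
    (E1 : ∀ i, ¬ intP ((a,b),(c,d)) i (x i))
    (E2g : ∀ i, i ≠ a → i ≠ b → ¬ intP ((a,b),(d,c)) i (x i)) :
    validP x (phiT x τ (((a,b),(c,d)), ((a,b),(d,c)))) ∧
    nxtP (nxtP x (phiT x τ (((a,b),(c,d)), ((a,b),(d,c)))).1)
        (phiT x τ (((a,b),(c,d)), ((a,b),(d,c)))).2
      = nxtP (nxtP x ((a,b),(c,d))) ((a,b),(d,c)) ∧
    (∀ i, owtP τ (phiT x τ (((a,b),(c,d)), ((a,b),(d,c)))).1 i
        + owtP τ (phiT x τ (((a,b),(c,d)), ((a,b),(d,c)))).2 i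
        = owtP τ ((a,b),(c,d)) i + owtP τ ((a,b),(d,c)) i) ∧
    phiT x τ (phiT x τ (((a,b),(c,d)), ((a,b),(d,c)))) = (((a,b),(c,d)), ((a,b),(d,c))) ∧
    phiT x τ (((a,b),(c,d)), ((a,b),(d,c))) ≠ (((a,b),(c,d)), ((a,b),(d,c))) := by
  have hn : 1 < n := one_lt_n hab
  have hra : τ a ≠ τ a + 1 := succ_ne hn (τ a)
  have huv : x.symm (τ a) ≠ x.symm (τ a + 1) := fun h => hra (by
    have := congrArg x h; simpa using this)
  have hxu : x (x.symm (τ a)) = τ a := x.apply_symm_apply _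
  have hxv : x (x.symm (τ a + 1)) = τ a + 1 := x.apply_symm_apply _
  -- thinness
  have thin : Vv a b = 1 := by
    by_contra hth
    have hz : Vv a b ≠ 0 := Vv_ne hab
    have hai0 : Vv a (a + 1) = 1 := Vv_succ hn a
    have hi0a : a + 1 ≠ a := (succ_ne hn a).symm
    have hi0b : a + 1 ≠ b := fun h => hth (h ▸ hai0)
    have hxc : Vv c (x (a + 1)) ≠ 0 :=
      Vv_ne (fun h => hi0a (x.injective (show x (a+1) = x a by rw [hxa]; exact h.symm)))
    have hxd : Vv d (x (a + 1)) ≠ 0 :=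
      Vv_ne (fun h => hi0b (x.injective (show x (a+1) = x b by rw [hxb]; exact h.symm)))
    have hE1 := E1 (a + 1)
    have hE2 := E2g (a + 1) hi0a hi0b
    simp only [intP_mk, hai0] at hE1 hE2
    have t1 := Vv_rel c d (x (a + 1))
    have c1 := Vv_comm hcd
    have b1 := Vv_lt c (x (a + 1)); have b2 := Vv_lt d (x (a + 1))
    have b3 := Vv_lt c d; have b4 := Vv_lt d c; have b5 := Vv_lt a b
    omega
  have hb1 : b = a + 1 := Vv_inj (by rw [thin, Vv_succ hn])
  -- compute phiT on p
  have hphi : phiT x τ (((a,b),(c,d)), ((a,b),(d,c)))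
      = (((x.symm (τ a), x.symm (τ a + 1)), (τ a, τ a + 1)),
         ((x.symm (τ a + 1), x.symm (τ a)), (τ a, τ a + 1))) := by
    simp [phiT]
  rw [hphi]
  have hρ1 : Vv (τ a) (τ a + 1) = 1 := Vv_succ hn (τ a)
  have hval : validP x (((x.symm (τ a), x.symm (τ a + 1)), (τ a, τ a + 1)),
      ((x.symm (τ a + 1), x.symm (τ a)), (τ a, τ a + 1))) := by
    refine ⟨⟨huv, hra, hxu, hxv, ?_⟩, huv.symm, hra, ?_, ?_, ?_⟩
    · intro i
      simp only [intP_mk]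
      intro H
      omega
    · show (x * Equiv.swap (x.symm (τ a)) (x.symm (τ a + 1))) (x.symm (τ a + 1)) = τ a
      rw [mulswap_right]; exact hxu
    · show (x * Equiv.swap (x.symm (τ a)) (x.symm (τ a + 1))) (x.symm (τ a)) = τ a + 1
      rw [mulswap_left]; exact hxv
    · intro i
      simp only [intP_mk]
      intro H
      omega
  refine ⟨hval, ?_, ?_, ?_, ?_⟩
  · show x * Equiv.swap (x.symm (τ a)) (x.symm (τ a + 1))
        * Equiv.swap (x.symm (τ a + 1)) (x.symm (τ a))
      = x * Equiv.swap a b * Equiv.swap a b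
    rw [mul_assoc, mul_assoc,
      Equiv.swap_comm (x.symm (τ a + 1)) (x.symm (τ a)), Equiv.swap_mul_self,
      Equiv.swap_mul_self]
  · intro i
    simp only [owtP, cellP_mk]
    rcases eq_or_ne i a with h | hia
    · rw [h]
      have e1 : Vv (τ a) (τ a) = 0 := Vv_self _
      have e2 : Vv a a = 0 := Vv_self _
      have t1 := Vv_rel (x.symm (τ a)) (x.symm (τ a + 1)) a
      have c1 := Vv_comm huv
      have t2 := Vv_rel c d (τ a)
      have c2 := Vv_comm hcd
      have b1 := Vv_lt (x.symm (τ a)) a; have b2 := Vv_lt (x.symm (τ a + 1)) a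
      have b3 := Vv_lt c (τ a); have b4 := Vv_lt d (τ a)
      have b5 := Vv_lt c d; have b6 := Vv_lt d c
      have b7 := Vv_lt (x.symm (τ a)) (x.symm (τ a + 1))
      have b8 := Vv_lt (x.symm (τ a + 1)) (x.symm (τ a))
      have hz : Vv a b ≠ 0 := Vv_ne hab
      split_ifs <;> omega
    · have hz1 : Vv (τ a) (τ i) ≠ 0 := Vv_ne (fun h => hia (τ.injective h.symm))
      have hz2 : Vv a i ≠ 0 := Vv_ne (Ne.symm hia)
      split_ifs <;> omega
  · have hphi2 : phiT x τ (((x.symm (τ a), x.symm (τ a + 1)), (τ a, τ a + 1)),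
         ((x.symm (τ a + 1), x.symm (τ a)), (τ a, τ a + 1)))
        = (((τ.symm (τ a), τ.symm (τ a) + 1), (x (τ.symm (τ a)), x (τ.symm (τ a) + 1))),
           ((τ.symm (τ a), τ.symm (τ a) + 1), (x (τ.symm (τ a) + 1), x (τ.symm (τ a))))) := by
      simp [phiT, huv.symm]
    rw [hphi2, Equiv.symm_apply_apply, ← hb1, hxa, hxb]
  · intro heq
    have e1 : x.symm (τ a) = a := congrArg (fun t => t.1.1.1) heq
    have e2 : x.symm (τ a + 1) = a := congrArg (fun t => t.2.1.1) heq
    exact huv (e1.trans e2.symm)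
end SpecV
section SpecH
variable {n : ℕ} [NeZero n]

lemma specH (x τ : Equiv.Perm (ZMod n)) (a b c d : ZMod n)
    (hab : a ≠ b) (hcd : c ≠ d) (hxa : x a = c) (hxb : x b = d)
    (E1 : ∀ i, ¬ intP ((a,b),(c,d)) i (x i))
    (E2g : ∀ i, i ≠ a → i ≠ b → ¬ intP ((b,a),(c,d)) i (x i)) :
    validP x (phiT x τ (((a,b),(c,d)), ((b,a),(c,d)))) ∧
    nxtP (nxtP x (phiT x τ (((a,b),(c,d)), ((b,a),(c,d)))).1)
        (phiT x τ (((a,b),(c,d)), ((b,a),(c,d)))).2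
      = nxtP (nxtP x ((a,b),(c,d))) ((b,a),(c,d)) ∧
    (∀ i, owtP τ (phiT x τ (((a,b),(c,d)), ((b,a),(c,d)))).1 i
        + owtP τ (phiT x τ (((a,b),(c,d)), ((b,a),(c,d)))).2 i
        = owtP τ ((a,b),(c,d)) i + owtP τ ((b,a),(c,d)) i) ∧
    phiT x τ (phiT x τ (((a,b),(c,d)), ((b,a),(c,d)))) = (((a,b),(c,d)), ((b,a),(c,d))) ∧
    phiT x τ (((a,b),(c,d)), ((b,a),(c,d))) ≠ (((a,b),(c,d)), ((b,a),(c,d))) := by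
  have hn : 1 < n := one_lt_n hab
  have haa : τ.symm c ≠ τ.symm c + 1 := succ_ne hn _
  have hxw : x (τ.symm c) ≠ x (τ.symm c + 1) := fun h => haa (x.injective h)
  -- thinness
  have thin : Vv c d = 1 := by
    by_contra hth
    have hz : Vv c d ≠ 0 := Vv_ne hcd
    have hcj0 : Vv c (c + 1) = 1 := Vv_succ hn c
    have hdj0 : c + 1 ≠ d := fun h => hth (by rw [← h, hcj0])
    have hi0 : x (x.symm (c + 1)) = c + 1 := x.apply_symm_apply _
    have hia : x.symm (c + 1) ≠ a := fun h => (succ_ne hn c).symm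
      (by rw [← hi0, h, hxa])
    have hib : x.symm (c + 1) ≠ b := fun h => hdj0 (by rw [← hi0, h, hxb])
    have hE1 := E1 (x.symm (c + 1)); rw [hi0] at hE1
    have hE2 := E2g (x.symm (c + 1)) hia hib; rw [hi0] at hE2
    simp only [intP_mk, hcj0] at hE1 hE2
    have t1 := Vv_rel a b (x.symm (c + 1))
    have c1 := Vv_comm hab
    have hz1 : Vv a (x.symm (c + 1)) ≠ 0 := Vv_ne (Ne.symm hia)
    have hz2 : Vv b (x.symm (c + 1)) ≠ 0 := Vv_ne (Ne.symm hib)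
    have b1 := Vv_lt a (x.symm (c + 1)); have b2 := Vv_lt b (x.symm (c + 1))
    have b3 := Vv_lt a b; have b4 := Vv_lt b a; have b5 := Vv_lt c d
    omega
  have hd1 : d = c + 1 := Vv_inj (by rw [thin, Vv_succ hn])
  have hsc : x.symm c = a := by rw [← hxa, Equiv.symm_apply_apply]
  have hsd : x.symm d = b := by rw [← hxb, Equiv.symm_apply_apply]
  have hphi : phiT x τ (((a,b),(c,d)), ((b,a),(c,d)))
      = (((τ.symm c, τ.symm c + 1), (x (τ.symm c), x (τ.symm c + 1))),
         ((τ.symm c, τ.symm c + 1), (x (τ.symm c + 1), x (τ.symm c)))) := by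
    simp [phiT, Ne.symm hab]
  rw [hphi]
  have hρ1 : Vv (τ.symm c) (τ.symm c + 1) = 1 := Vv_succ hn _
  have hval : validP x (((τ.symm c, τ.symm c + 1), (x (τ.symm c), x (τ.symm c + 1))),
      ((τ.symm c, τ.symm c + 1), (x (τ.symm c + 1), x (τ.symm c)))) := by
    refine ⟨⟨haa, hxw, rfl, rfl, ?_⟩, haa, hxw.symm, ?_, ?_, ?_⟩
    · intro i
      simp only [intP_mk]
      intro H
      omega
    · show (x * Equiv.swap (τ.symm c) (τ.symm c + 1)) (τ.symm c) = x (τ.symm c + 1)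
      rw [mulswap_left]
    · show (x * Equiv.swap (τ.symm c) (τ.symm c + 1)) (τ.symm c + 1) = x (τ.symm c)
      rw [mulswap_right]
    · intro i
      simp only [intP_mk]
      intro H
      omega
  refine ⟨hval, ?_, ?_, ?_, ?_⟩
  · show x * Equiv.swap (τ.symm c) (τ.symm c + 1) * Equiv.swap (τ.symm c) (τ.symm c + 1)
      = x * Equiv.swap a b * Equiv.swap b a
    rw [mul_assoc, mul_assoc, Equiv.swap_comm b a, Equiv.swap_mul_self, Equiv.swap_mul_self]
  · intro i
    simp only [owtP, cellP_mk]
    rcases eq_or_ne i (τ.symm c) with h | hia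
    · rw [h, Equiv.apply_symm_apply]
      have e1 : Vv (τ.symm c) (τ.symm c) = 0 := Vv_self _
      have e2 : Vv c c = 0 := Vv_self _
      have t1 := Vv_rel (x (τ.symm c)) (x (τ.symm c + 1)) c
      have c1 := Vv_comm hxw
      have t2 := Vv_rel a b (τ.symm c)
      have c2 := Vv_comm hab
      have b1 := Vv_lt (x (τ.symm c)) c; have b2 := Vv_lt (x (τ.symm c + 1)) c
      have b3 := Vv_lt a (τ.symm c); have b4 := Vv_lt b (τ.symm c)
      have b5 := Vv_lt a b; have b6 := Vv_lt b a
      have b7 := Vv_lt (x (τ.symm c)) (x (τ.symm c + 1))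
      have b8 := Vv_lt (x (τ.symm c + 1)) (x (τ.symm c))
      have hz : Vv c d ≠ 0 := Vv_ne hcd
      split_ifs <;> omega
    · have hz1 : Vv (τ.symm c) i ≠ 0 := Vv_ne (Ne.symm hia)
      have hz2 : Vv c (τ i) ≠ 0 := Vv_ne (fun h => hia (by
        rw [h, Equiv.symm_apply_apply]))
      split_ifs <;> omega
  · have hphi2 : phiT x τ (((τ.symm c, τ.symm c + 1), (x (τ.symm c), x (τ.symm c + 1))),
        ((τ.symm c, τ.symm c + 1), (x (τ.symm c + 1), x (τ.symm c))))
        = (((x.symm (τ (τ.symm c)), x.symm (τ (τ.symm c) + 1)), (τ (τ.symm c), τ (τ.symm c) + 1)),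
           ((x.symm (τ (τ.symm c) + 1), x.symm (τ (τ.symm c))), (τ (τ.symm c), τ (τ.symm c) + 1))) := by
      simp [phiT]
    rw [hphi2, Equiv.apply_symm_apply, ← hd1, hsc, hsd]
  · intro heq
    have e1 : τ.symm c = a := congrArg (fun t => t.1.1.1) heq
    have e2 : τ.symm c = b := congrArg (fun t => t.2.1.1) heq
    exact hab (e1.symm.trans e2)
end SpecH
section Spec3a
variable {n : ℕ} [NeZero n]

lemma spec3a (x τ : Equiv.Perm (ZMod n)) (a b c d B D : ZMod n)
    (hab : a ≠ b) (hcd : c ≠ d) (hbB : b ≠ B) (hcD : c ≠ D) (hBa : B ≠ a)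
    (hxa : x a = c) (hxb : x b = d) (hxB : x B = D)
    (E1 : ∀ i, ¬ intP ((a,b),(c,d)) i (x i))
    (E2g : ∀ i, i ≠ a → i ≠ b → ¬ intP ((b,B),(c,D)) i (x i))
    (E2a : ¬ intP ((b,B),(c,D)) a d)
    (hcond : Vv c d < Vv c D) :
    validP x (phiT x τ (((a,b),(c,d)), ((b,B),(c,D)))) ∧
    nxtP (nxtP x (phiT x τ (((a,b),(c,d)), ((b,B),(c,D)))).1)
        (phiT x τ (((a,b),(c,d)), ((b,B),(c,D)))).2
      = nxtP (nxtP x ((a,b),(c,d))) ((b,B),(c,D)) ∧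
    (∀ i, owtP τ (phiT x τ (((a,b),(c,d)), ((b,B),(c,D)))).1 i
        + owtP τ (phiT x τ (((a,b),(c,d)), ((b,B),(c,D)))).2 i
        = owtP τ ((a,b),(c,d)) i + owtP τ ((b,B),(c,D)) i) ∧
    phiT x τ (phiT x τ (((a,b),(c,d)), ((b,B),(c,D)))) = (((a,b),(c,d)), ((b,B),(c,D))) ∧
    phiT x τ (((a,b),(c,d)), ((b,B),(c,D))) ≠ (((a,b),(c,d)), ((b,B),(c,D))) := by
  have haB : a ≠ B := Ne.symm hBa
  have hdD : d ≠ D := fun h => hbB (x.injective (by rw [hxb, hxB, h]))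
  have hdc : d ≠ c := Ne.symm hcd
  have hDc : D ≠ c := Ne.symm hcD
  have hzcd : Vv c d ≠ 0 := Vv_ne hcd
  have hzcD : Vv c D ≠ 0 := Vv_ne hcD
  have hzdD : Vv d D ≠ 0 := Vv_ne hdD
  have hzab : Vv a b ≠ 0 := Vv_ne hab
  have hzbB : Vv b B ≠ 0 := Vv_ne hbB
  have hzaB : Vv a B ≠ 0 := Vv_ne haB
  have hzba : Vv b a ≠ 0 := Vv_ne (Ne.symm hab)
  have bab := Vv_lt a b; have baB := Vv_lt a B; have bbB := Vv_lt b B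
  have bba := Vv_lt b a; have bcd := Vv_lt c d; have bcD := Vv_lt c D
  have bdD := Vv_lt d D; have bdc := Vv_lt d c
  have ccd := Vv_comm hcd
  have cab := Vv_comm hab
  have noRowWrap : Vv c D = Vv c d + Vv d D := by
    have t1 := Vv_rel c d D
    omega
  have noColWrap : Vv a B = Vv a b + Vv b B := by
    have hE2a := E2a
    simp only [intP_mk] at hE2a
    have t1 := Vv_rel a b B
    omega
  have hphi : phiT x τ (((a,b),(c,d)), ((b,B),(c,D)))
      = (((b,B),(d,D)), ((a,B),(c,d))) := by
    simp [phiT, Ne.symm hab, hBa, hcond]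
  rw [hphi]
  have empt1 : ∀ i, ¬ intP ((b,B),(d,D)) i (x i) := by
    intro i
    rcases eq_or_ne i a with h | hia
    · rw [h, hxa]
      simp only [intP_mk]
      intro H
      omega
    rcases eq_or_ne i b with h | hib
    · rw [h, hxb]
      simp only [intP_mk]
      have := Vv_self b
      intro H
      omega
    rcases eq_or_ne i B with h | hiB
    · rw [h, hxB]
      simp only [intP_mk]
      intro H
      omega
    · have hE2 := E2g i hia hib
      simp only [intP_mk] at hE2 ⊢
      intro H
      have t1 := Vv_rel c d (x i)
      have b1 := Vv_lt c (x i); have b2 := Vv_lt d (x i)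
      omega
  have empt2 : ∀ i, ¬ intP ((a,B),(c,d)) i ((x * Equiv.swap b B) i) := by
    apply empt_swap_intro
    · intro i hib hiB
      rcases eq_or_ne i a with h | hia
      · rw [h, hxa]
        simp only [intP_mk]
        have := Vv_self a
        intro H
        omega
      · have hE1 := E1 i
        have hE2 := E2g i hia hib
        simp only [intP_mk] at hE1 hE2 ⊢
        intro H
        have t1 := Vv_rel a b i
        have hne : Vv a i ≠ Vv a b := fun h => hib (Vv_inj h)
        have b1 := Vv_lt a i; have b2 := Vv_lt b i
        omega
    · rw [hxB]
      simp only [intP_mk]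
      intro H
      omega
    · rw [hxb]
      simp only [intP_mk]
      intro H
      omega
  refine ⟨⟨⟨hbB, hdD, hxb, hxB, empt1⟩, haB, hcd, ?_, ?_, empt2⟩, ?_, ?_, ?_, ?_⟩
  · show (x * Equiv.swap b B) a = c
    rw [mulswap_other x hab haB]; exact hxa
  · show (x * Equiv.swap b B) B = d
    rw [mulswap_right]; exact hxb
  · show x * Equiv.swap b B * Equiv.swap a B = x * Equiv.swap a b * Equiv.swap b B
    rw [mul_assoc, mul_assoc, cyc_12 hab hbB haB]
  · intro i
    simp only [owtP, cellP_mk]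
    have t1 := Vv_rel a b i
    have t2 := Vv_rel c d (τ i)
    have b1 := Vv_lt a i; have b2 := Vv_lt b i
    have b3 := Vv_lt c (τ i); have b4 := Vv_lt d (τ i)
    split_ifs <;> omega
  · have hcond6 : Vv a b < Vv a B := by omega
    have hphi2 : phiT x τ (((b,B),(d,D)), ((a,B),(c,d)))
        = (((a,b),(c,d)), ((b,B),(c,D))) := by
      simp [phiT, hab, haB, hbB.symm, hcond6]
    exact hphi2
  · intro heq
    exact hab (congrArg (fun t => t.1.1.1) heq).symm
end Spec3a
section Spec3b
variable {n : ℕ} [NeZero n]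

lemma spec3b (x τ : Equiv.Perm (ZMod n)) (a b c d B D : ZMod n)
    (hab : a ≠ b) (hcd : c ≠ d) (hbB : b ≠ B) (hcD : c ≠ D) (hBa : B ≠ a)
    (hxa : x a = c) (hxb : x b = d) (hxB : x B = D)
    (E1 : ∀ i, ¬ intP ((a,b),(c,d)) i (x i))
    (E2g : ∀ i, i ≠ a → i ≠ b → ¬ intP ((b,B),(c,D)) i (x i))
    (hcond : Vv c D < Vv c d) :
    validP x (phiT x τ (((a,b),(c,d)), ((b,B),(c,D)))) ∧
    nxtP (nxtP x (phiT x τ (((a,b),(c,d)), ((b,B),(c,D)))).1)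
        (phiT x τ (((a,b),(c,d)), ((b,B),(c,D)))).2
      = nxtP (nxtP x ((a,b),(c,d))) ((b,B),(c,D)) ∧
    (∀ i, owtP τ (phiT x τ (((a,b),(c,d)), ((b,B),(c,D)))).1 i
        + owtP τ (phiT x τ (((a,b),(c,d)), ((b,B),(c,D)))).2 i
        = owtP τ ((a,b),(c,d)) i + owtP τ ((b,B),(c,D)) i) ∧
    phiT x τ (phiT x τ (((a,b),(c,d)), ((b,B),(c,D)))) = (((a,b),(c,d)), ((b,B),(c,D))) ∧
    phiT x τ (((a,b),(c,d)), ((b,B),(c,D))) ≠ (((a,b),(c,d)), ((b,B),(c,D))) := by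
  have haB : a ≠ B := Ne.symm hBa
  have hdD : d ≠ D := fun h => hbB (x.injective (by rw [hxb, hxB, h]))
  have hDd : D ≠ d := Ne.symm hdD
  have hzcd : Vv c d ≠ 0 := Vv_ne hcd
  have hzcD : Vv c D ≠ 0 := Vv_ne hcD
  have hzDd : Vv D d ≠ 0 := Vv_ne hDd
  have hzab : Vv a b ≠ 0 := Vv_ne hab
  have hzbB : Vv b B ≠ 0 := Vv_ne hbB
  have hzaB : Vv a B ≠ 0 := Vv_ne haB
  have bab := Vv_lt a b; have baB := Vv_lt a B; have bbB := Vv_lt b B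
  have bcd := Vv_lt c d; have bcD := Vv_lt c D; have bDd := Vv_lt D d
  have bDc := Vv_lt D c
  have ccd := Vv_comm hcd
  have ccD := Vv_comm hcD
  have cab := Vv_comm hab
  have noRowWrap : Vv c d = Vv c D + Vv D d := by
    have t1 := Vv_rel c D d
    omega
  have noColWrap : Vv a B = Vv a b + Vv b B := by
    have hE1B := E1 B
    rw [hxB] at hE1B
    simp only [intP_mk] at hE1B
    have t1 := Vv_rel a b B
    omega
  have hncond : ¬ Vv c d < Vv c D := by omega
  have hphi : phiT x τ (((a,b),(c,d)), ((b,B),(c,D)))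
      = (((a,B),(c,D)), ((a,b),(D,d))) := by
    simp [phiT, Ne.symm hab, hBa, hncond]
  rw [hphi]
  have empt1 : ∀ i, ¬ intP ((a,B),(c,D)) i (x i) := by
    intro i
    rcases eq_or_ne i a with h | hia
    · rw [h, hxa]
      simp only [intP_mk]
      have := Vv_self a
      intro H
      omega
    rcases eq_or_ne i b with h | hib
    · rw [h, hxb]
      simp only [intP_mk]
      intro H
      omega
    rcases eq_or_ne i B with h | hiB
    · rw [h, hxB]
      simp only [intP_mk]
      intro H
      omega
    · have hE1 := E1 i
      have hE2 := E2g i hia hib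
      simp only [intP_mk] at hE1 hE2 ⊢
      intro H
      have t1 := Vv_rel a b i
      have hne : Vv a i ≠ Vv a b := fun h => hib (Vv_inj h)
      have b1 := Vv_lt a i; have b2 := Vv_lt b i
      omega
  have empt2 : ∀ i, ¬ intP ((a,b),(D,d)) i ((x * Equiv.swap a B) i) := by
    apply empt_swap_intro
    · intro i hia hiB
      rcases eq_or_ne i b with h | hib
      · rw [h, hxb]
        simp only [intP_mk]
        intro H
        omega
      · have hE1 := E1 i
        simp only [intP_mk] at hE1 ⊢
        intro H
        have t1 := Vv_rel c D (x i)
        have b1 := Vv_lt c (x i); have b2 := Vv_lt D (x i)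
        omega
    · rw [hxB]
      simp only [intP_mk]
      have := Vv_self D
      intro H
      omega
    · rw [hxa]
      simp only [intP_mk]
      intro H
      omega
  refine ⟨⟨⟨haB, hcD, hxa, hxB, empt1⟩, hab, hDd, ?_, ?_, empt2⟩, ?_, ?_, ?_, ?_⟩
  · show (x * Equiv.swap a B) a = D
    rw [mulswap_left]; exact hxB
  · show (x * Equiv.swap a B) b = d
    rw [mulswap_other x (Ne.symm hab) hbB]; exact hxb
  · show x * Equiv.swap a B * Equiv.swap a b = x * Equiv.swap a b * Equiv.swap b B
    rw [mul_assoc, mul_assoc, cyc_13 hab hbB haB]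
  · intro i
    simp only [owtP, cellP_mk]
    have t1 := Vv_rel a b i
    have t2 := Vv_rel c D (τ i)
    have b1 := Vv_lt a i; have b2 := Vv_lt b i
    have b3 := Vv_lt c (τ i); have b4 := Vv_lt D (τ i)
    split_ifs <;> omega
  · have hncond5 : ¬ Vv a B < Vv a b := by omega
    have hphi2 : phiT x τ (((a,B),(c,D)), ((a,b),(D,d)))
        = (((a,b),(c,d)), ((b,B),(c,D))) := by
      simp [phiT, hbB, haB, Ne.symm hab, hncond5]
    exact hphi2
  · intro heq
    exact hbB.symm (congrArg (fun t => t.1.1.2) heq)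
end Spec3b
section Spec4
variable {n : ℕ} [NeZero n]

lemma spec4T (x τ : Equiv.Perm (ZMod n)) (a b c d A C : ZMod n)
    (hab : a ≠ b) (hcd : c ≠ d) (hAa : A ≠ a) (hAb : A ≠ b) (hCd : C ≠ d)
    (hxa : x a = c) (hxb : x b = d) (hxA : x A = C)
    (E1 : ∀ i, ¬ intP ((a,b),(c,d)) i (x i))
    (E2g : ∀ i, i ≠ a → i ≠ b → ¬ intP ((A,a),(C,d)) i (x i))
    (E2b : ¬ intP ((A,a),(C,d)) b c)
    (hcond : Vv C c < Vv C d) :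
    validP x (phiT x τ (((a,b),(c,d)), ((A,a),(C,d)))) ∧
    nxtP (nxtP x (phiT x τ (((a,b),(c,d)), ((A,a),(C,d)))).1)
        (phiT x τ (((a,b),(c,d)), ((A,a),(C,d)))).2
      = nxtP (nxtP x ((a,b),(c,d))) ((A,a),(C,d)) ∧
    (∀ i, owtP τ (phiT x τ (((a,b),(c,d)), ((A,a),(C,d)))).1 i
        + owtP τ (phiT x τ (((a,b),(c,d)), ((A,a),(C,d)))).2 i
        = owtP τ ((a,b),(c,d)) i + owtP τ ((A,a),(C,d)) i) ∧
    phiT x τ (phiT x τ (((a,b),(c,d)), ((A,a),(C,d)))) = (((a,b),(c,d)), ((A,a),(C,d))) ∧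
    phiT x τ (((a,b),(c,d)), ((A,a),(C,d))) ≠ (((a,b),(c,d)), ((A,a),(C,d))) := by
  have hCc : C ≠ c := fun h => hAa (x.injective (by rw [hxa, hxA, h]))
  have hcC : c ≠ C := Ne.symm hCc
  have hdC : d ≠ C := fun h => hAb (x.injective (by rw [hxb, hxA, h])).symm
  have hzcd : Vv c d ≠ 0 := Vv_ne hcd
  have hzCc : Vv C c ≠ 0 := Vv_ne hCc
  have hzCd : Vv C d ≠ 0 := Vv_ne (Ne.symm hdC)
  have hzab : Vv a b ≠ 0 := Vv_ne hab
  have hzAa : Vv A a ≠ 0 := Vv_ne hAa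
  have hzAb : Vv A b ≠ 0 := Vv_ne hAb
  have bab := Vv_lt a b; have bAa := Vv_lt A a; have bAb := Vv_lt A b
  have bcd := Vv_lt c d; have bCc := Vv_lt C c; have bCd := Vv_lt C d
  have bcC := Vv_lt c C
  have ccd := Vv_comm hcd
  have ccC := Vv_comm hcC
  have cab := Vv_comm hab
  have caA := Vv_comm (Ne.symm hAa)
  have rowSplit : Vv C d = Vv C c + Vv c d := by
    have t1 := Vv_rel C c d
    omega
  have colFact : Vv A b = Vv A a + Vv a b := by
    have hE2b := E2b
    simp only [intP_mk] at hE2b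
    have t1 := Vv_rel A a b
    omega
  have hphi : phiT x τ (((a,b),(c,d)), ((A,a),(C,d)))
      = (((A,a),(C,c)), ((A,b),(c,d))) := by
    simp [phiT, hAa, hAb, hcond]
  rw [hphi]
  have empt1 : ∀ i, ¬ intP ((A,a),(C,c)) i (x i) := by
    intro i
    rcases eq_or_ne i A with h | hiA
    · rw [h, hxA]
      simp only [intP_mk]
      have := Vv_self C
      intro H
      omega
    rcases eq_or_ne i a with h | hia
    · rw [h, hxa]
      simp only [intP_mk]
      intro H
      omega
    rcases eq_or_ne i b with h | hib
    · rw [h, hxb]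
      simp only [intP_mk]
      intro H
      omega
    · have hE2 := E2g i hia hib
      simp only [intP_mk] at hE2 ⊢
      intro H
      omega
  have empt2 : ∀ i, ¬ intP ((A,b),(c,d)) i ((x * Equiv.swap A a) i) := by
    apply empt_swap_intro
    · intro i hiA hia
      rcases eq_or_ne i b with h | hib
      · rw [h, hxb]
        simp only [intP_mk]
        intro H
        omega
      · have hE1 := E1 i
        have hE2 := E2g i hia hib
        simp only [intP_mk] at hE1 hE2 ⊢
        intro H
        have t1 := Vv_rel A a i
        have t2 := Vv_rel C c (x i)
        have hne : Vv A i ≠ Vv A a := fun h => hia (Vv_inj h)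
        have b1 := Vv_lt A i; have b2 := Vv_lt a i
        have b3 := Vv_lt C (x i); have b4 := Vv_lt c (x i)
        omega
    · rw [hxa]
      simp only [intP_mk]
      have := Vv_self c
      intro H
      omega
    · rw [hxA]
      simp only [intP_mk]
      intro H
      omega
  refine ⟨⟨⟨hAa, hCc, hxA, hxa, empt1⟩, hAb, hcd, ?_, ?_, empt2⟩, ?_, ?_, ?_, ?_⟩
  · show (x * Equiv.swap A a) A = c
    rw [mulswap_left]; exact hxa
  · show (x * Equiv.swap A a) b = d
    rw [mulswap_other x (Ne.symm hAb) (Ne.symm hab)]; exact hxb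
  · show x * Equiv.swap A a * Equiv.swap A b = x * Equiv.swap a b * Equiv.swap A a
    have e1 := cyc_13 hAb (Ne.symm hab) hAa
    have e2 := cyc_12 hAb (Ne.symm hab) hAa
    rw [mul_assoc, mul_assoc, ← e1, e2, Equiv.swap_comm b a]
  · intro i
    simp only [owtP, cellP_mk]
    have t1 := Vv_rel A a i
    have t2 := Vv_rel C c (τ i)
    have b1 := Vv_lt A i; have b2 := Vv_lt a i
    have b3 := Vv_lt C (τ i); have b4 := Vv_lt c (τ i)
    split_ifs <;> omega
  · have hcond5 : Vv A a < Vv A b := by omega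
    have hphi2 : phiT x τ (((A,a),(C,c)), ((A,b),(c,d)))
        = (((a,b),(c,d)), ((A,a),(C,d))) := by
      simp [phiT, Ne.symm hab, hAa, hAb.symm, hcond5]
    exact hphi2
  · intro heq
    exact hAa (congrArg (fun t => t.1.1.1) heq)

lemma spec4F (x τ : Equiv.Perm (ZMod n)) (a b c d A C : ZMod n)
    (hab : a ≠ b) (hcd : c ≠ d) (hAa : A ≠ a) (hAb : A ≠ b) (hCd : C ≠ d)
    (hxa : x a = c) (hxb : x b = d) (hxA : x A = C)
    (E1 : ∀ i, ¬ intP ((a,b),(c,d)) i (x i))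
    (E2g : ∀ i, i ≠ a → i ≠ b → ¬ intP ((A,a),(C,d)) i (x i))
    (hcond : Vv C d < Vv C c) :
    validP x (phiT x τ (((a,b),(c,d)), ((A,a),(C,d)))) ∧
    nxtP (nxtP x (phiT x τ (((a,b),(c,d)), ((A,a),(C,d)))).1)
        (phiT x τ (((a,b),(c,d)), ((A,a),(C,d)))).2
      = nxtP (nxtP x ((a,b),(c,d))) ((A,a),(C,d)) ∧
    (∀ i, owtP τ (phiT x τ (((a,b),(c,d)), ((A,a),(C,d)))).1 i
        + owtP τ (phiT x τ (((a,b),(c,d)), ((A,a),(C,d)))).2 i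
        = owtP τ ((a,b),(c,d)) i + owtP τ ((A,a),(C,d)) i) ∧
    phiT x τ (phiT x τ (((a,b),(c,d)), ((A,a),(C,d)))) = (((a,b),(c,d)), ((A,a),(C,d))) ∧
    phiT x τ (((a,b),(c,d)), ((A,a),(C,d))) ≠ (((a,b),(c,d)), ((A,a),(C,d))) := by
  have hCc : C ≠ c := fun h => hAa (x.injective (by rw [hxa, hxA, h]))
  have hcC : c ≠ C := Ne.symm hCc
  have hdC : d ≠ C := fun h => hAb (x.injective (by rw [hxb, hxA, h])).symm
  have hzcd : Vv c d ≠ 0 := Vv_ne hcd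
  have hzCc : Vv C c ≠ 0 := Vv_ne hCc
  have hzcC : Vv c C ≠ 0 := Vv_ne hcC
  have hzCd : Vv C d ≠ 0 := Vv_ne (Ne.symm hdC)
  have hzdc : Vv d c ≠ 0 := Vv_ne (Ne.symm hcd)
  have hzab : Vv a b ≠ 0 := Vv_ne hab
  have hzba : Vv b a ≠ 0 := Vv_ne (Ne.symm hab)
  have hzAa : Vv A a ≠ 0 := Vv_ne hAa
  have hzaA : Vv a A ≠ 0 := Vv_ne (Ne.symm hAa)
  have hzAb : Vv A b ≠ 0 := Vv_ne hAb
  have hzbA : Vv b A ≠ 0 := Vv_ne (Ne.symm hAb)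
  have bab := Vv_lt a b; have bAa := Vv_lt A a; have bAb := Vv_lt A b
  have baA := Vv_lt a A; have bbA := Vv_lt b A
  have bcd := Vv_lt c d; have bCc := Vv_lt C c; have bCd := Vv_lt C d
  have bcC := Vv_lt c C; have bdc := Vv_lt d c; have bdC := Vv_lt d C
  have ccd := Vv_comm hcd
  have ccC := Vv_comm hcC
  have cdC := Vv_comm hdC
  have cab := Vv_comm hab
  have caA := Vv_comm (Ne.symm hAa)
  have cbA := Vv_comm (Ne.symm hAb)
  have rowSplit : Vv C c = Vv C d + Vv d c := by
    have t1 := Vv_rel C d c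
    omega
  have colFact : Vv a A = Vv a b + Vv b A := by
    have hE1A := E1 A
    rw [hxA] at hE1A
    simp only [intP_mk] at hE1A
    have t1 := Vv_rel a b A
    omega
  have hncond : ¬ Vv C c < Vv C d := by omega
  have hphi : phiT x τ (((a,b),(c,d)), ((A,a),(C,d)))
      = (((A,b),(C,d)), ((a,b),(c,C))) := by
    simp [phiT, hAa, hAb, hncond]
  rw [hphi]
  have empt1 : ∀ i, ¬ intP ((A,b),(C,d)) i (x i) := by
    intro i
    rcases eq_or_ne i A with h | hiA
    · rw [h, hxA]
      simp only [intP_mk]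
      have := Vv_self C
      intro H
      omega
    rcases eq_or_ne i b with h | hib
    · rw [h, hxb]
      simp only [intP_mk]
      intro H
      omega
    rcases eq_or_ne i a with h | hia
    · rw [h, hxa]
      simp only [intP_mk]
      intro H
      omega
    · have hE1 := E1 i
      have hE2 := E2g i hia hib
      simp only [intP_mk] at hE1 hE2 ⊢
      intro H
      have t1 := Vv_rel A a i
      have t2 := Vv_rel C c (x i)
      have hne : Vv A i ≠ Vv A a := fun h => hia (Vv_inj h)
      have b1 := Vv_lt A i; have b2 := Vv_lt a i
      have b3 := Vv_lt C (x i); have b4 := Vv_lt c (x i)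
      omega
  have empt2 : ∀ i, ¬ intP ((a,b),(c,C)) i ((x * Equiv.swap A b) i) := by
    apply empt_swap_intro
    · intro i hiA hib
      rcases eq_or_ne i a with h | hia
      · rw [h, hxa]
        simp only [intP_mk]
        have := Vv_self a
        intro H
        omega
      · have hE1 := E1 i
        simp only [intP_mk] at hE1 ⊢
        intro H
        have b3 := Vv_lt c (x i)
        omega
    · rw [hxb]
      simp only [intP_mk]
      intro H
      omega
    · rw [hxA]
      simp only [intP_mk]
      intro H
      omega
  refine ⟨⟨⟨hAb, hCd, hxA, hxb, empt1⟩, hab, hcC, ?_, ?_, empt2⟩, ?_, ?_, ?_, ?_⟩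
  · show (x * Equiv.swap A b) a = c
    rw [mulswap_other x (Ne.symm hAa) hab]; exact hxa
  · show (x * Equiv.swap A b) b = C
    rw [mulswap_right]; exact hxA
  · show x * Equiv.swap A b * Equiv.swap a b = x * Equiv.swap a b * Equiv.swap A a
    have e1 := cyc_12 (Ne.symm hAa) hAb hab
    have e2 := cyc_13 (Ne.symm hAa) hAb hab
    rw [mul_assoc, mul_assoc, ← e1, e2, Equiv.swap_comm a A]
  · intro i
    simp only [owtP, cellP_mk]
    have t1 := Vv_rel A a i
    have t2 := Vv_rel C c (τ i)
    have b1 := Vv_lt A i; have b2 := Vv_lt a i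
    have b3 := Vv_lt C (τ i); have b4 := Vv_lt c (τ i)
    split_ifs <;> omega
  · have hncond6 : ¬ Vv a A < Vv a b := by omega
    have hphi2 : phiT x τ (((A,b),(C,d)), ((a,b),(c,C)))
        = (((a,b),(c,d)), ((A,a),(C,d))) := by
      simp [phiT, hAa.symm, hab, hAb.symm, hncond6]
    exact hphi2
  · intro heq
    exact hAa (congrArg (fun t => t.1.1.1) heq)
end Spec4
section Spec5
variable {n : ℕ} [NeZero n]

lemma spec5T (x τ : Equiv.Perm (ZMod n)) (a b c d B D : ZMod n)
    (hab : a ≠ b) (hcd : c ≠ d) (haB : a ≠ B) (hbB : b ≠ B) (hdD : d ≠ D)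
    (hxa : x a = c) (hxb : x b = d) (hxB : x B = D)
    (E1 : ∀ i, ¬ intP ((a,b),(c,d)) i (x i))
    (E2g : ∀ i, i ≠ a → i ≠ b → ¬ intP ((a,B),(d,D)) i (x i))
    (E2b : ¬ intP ((a,B),(d,D)) b c)
    (hcond : Vv a b < Vv a B) :
    validP x (phiT x τ (((a,b),(c,d)), ((a,B),(d,D)))) ∧
    nxtP (nxtP x (phiT x τ (((a,b),(c,d)), ((a,B),(d,D)))).1)
        (phiT x τ (((a,b),(c,d)), ((a,B),(d,D)))).2
      = nxtP (nxtP x ((a,b),(c,d))) ((a,B),(d,D)) ∧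
    (∀ i, owtP τ (phiT x τ (((a,b),(c,d)), ((a,B),(d,D)))).1 i
        + owtP τ (phiT x τ (((a,b),(c,d)), ((a,B),(d,D)))).2 i
        = owtP τ ((a,b),(c,d)) i + owtP τ ((a,B),(d,D)) i) ∧
    phiT x τ (phiT x τ (((a,b),(c,d)), ((a,B),(d,D)))) = (((a,b),(c,d)), ((a,B),(d,D))) ∧
    phiT x τ (((a,b),(c,d)), ((a,B),(d,D))) ≠ (((a,b),(c,d)), ((a,B),(d,D))) := by
  have hcD : c ≠ D := fun h => haB (x.injective (by rw [hxa, hxB, h]))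
  have hzcd : Vv c d ≠ 0 := Vv_ne hcd
  have hzcD : Vv c D ≠ 0 := Vv_ne hcD
  have hzdD : Vv d D ≠ 0 := Vv_ne hdD
  have hzdc : Vv d c ≠ 0 := Vv_ne (Ne.symm hcd)
  have hzab : Vv a b ≠ 0 := Vv_ne hab
  have hzbB : Vv b B ≠ 0 := Vv_ne hbB
  have hzaB : Vv a B ≠ 0 := Vv_ne haB
  have bab := Vv_lt a b; have baB := Vv_lt a B; have bbB := Vv_lt b B
  have bcd := Vv_lt c d; have bcD := Vv_lt c D; have bdD := Vv_lt d D
  have bdc := Vv_lt d c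
  have ccd := Vv_comm hcd
  have cab := Vv_comm hab
  have colEq : Vv a B = Vv a b + Vv b B := by
    have t1 := Vv_rel a b B
    omega
  have rowEq : Vv c D = Vv c d + Vv d D := by
    have hE2b := E2b
    simp only [intP_mk] at hE2b
    have t1 := Vv_rel c d D
    omega
  have hphi : phiT x τ (((a,b),(c,d)), ((a,B),(d,D)))
      = (((b,B),(d,D)), ((a,b),(c,D))) := by
    simp [phiT, hbB.symm, hab, Ne.symm haB, hcond]
  rw [hphi]
  have empt1 : ∀ i, ¬ intP ((b,B),(d,D)) i (x i) := by
    intro i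
    rcases eq_or_ne i a with h | hia
    · rw [h, hxa]
      simp only [intP_mk]
      intro H
      omega
    rcases eq_or_ne i b with h | hib
    · rw [h, hxb]
      simp only [intP_mk]
      have := Vv_self b
      intro H
      omega
    rcases eq_or_ne i B with h | hiB
    · rw [h, hxB]
      simp only [intP_mk]
      intro H
      omega
    · have hE2 := E2g i hia hib
      simp only [intP_mk] at hE2 ⊢
      intro H
      have t1 := Vv_rel a b i
      have b1 := Vv_lt a i; have b2 := Vv_lt b i
      omega
  have empt2 : ∀ i, ¬ intP ((a,b),(c,D)) i ((x * Equiv.swap b B) i) := by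
    apply empt_swap_intro
    · intro i hib hiB
      rcases eq_or_ne i a with h | hia
      · rw [h, hxa]
        simp only [intP_mk]
        have := Vv_self a
        intro H
        omega
      · have hE1 := E1 i
        have hE2 := E2g i hia hib
        simp only [intP_mk] at hE1 hE2 ⊢
        intro H
        have t1 := Vv_rel a b i
        have t2 := Vv_rel c d (x i)
        have hne : Vv c (x i) ≠ Vv c d := fun h => hib (x.injective (show x i = x b by
          rw [hxb]; exact Vv_inj h))
        have b1 := Vv_lt a i; have b2 := Vv_lt b i
        have b3 := Vv_lt c (x i); have b4 := Vv_lt d (x i)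
        omega
    · rw [hxB]
      simp only [intP_mk]
      intro H
      omega
    · rw [hxb]
      simp only [intP_mk]
      intro H
      omega
  refine ⟨⟨⟨hbB, hdD, hxb, hxB, empt1⟩, hab, hcD, ?_, ?_, empt2⟩, ?_, ?_, ?_, ?_⟩
  · show (x * Equiv.swap b B) a = c
    rw [mulswap_other x hab haB]; exact hxa
  · show (x * Equiv.swap b B) b = D
    rw [mulswap_left]; exact hxB
  · show x * Equiv.swap b B * Equiv.swap a b = x * Equiv.swap a b * Equiv.swap a B
    have e1 := cyc_12 haB (Ne.symm hbB) hab
    have e2 := cyc_13 haB (Ne.symm hbB) hab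
    rw [mul_assoc, mul_assoc, Equiv.swap_comm b B, ← e1, e2]
  · intro i
    simp only [owtP, cellP_mk]
    have t1 := Vv_rel a b i
    have t2 := Vv_rel c d (τ i)
    have b1 := Vv_lt a i; have b2 := Vv_lt b i
    have b3 := Vv_lt c (τ i); have b4 := Vv_lt d (τ i)
    split_ifs <;> omega
  · have hcond4 : Vv c d < Vv c D := by omega
    have hphi2 : phiT x τ (((b,B),(d,D)), ((a,b),(c,D)))
        = (((a,b),(c,d)), ((a,B),(d,D))) := by
      simp [phiT, hab, haB, hcond4]
    exact hphi2
  · intro heq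
    exact hab (congrArg (fun t => t.1.1.1) heq).symm

lemma spec5F (x τ : Equiv.Perm (ZMod n)) (a b c d B D : ZMod n)
    (hab : a ≠ b) (hcd : c ≠ d) (haB : a ≠ B) (hbB : b ≠ B) (hdD : d ≠ D)
    (hxa : x a = c) (hxb : x b = d) (hxB : x B = D)
    (E1 : ∀ i, ¬ intP ((a,b),(c,d)) i (x i))
    (E2g : ∀ i, i ≠ a → i ≠ b → ¬ intP ((a,B),(d,D)) i (x i))
    (hcond : Vv a B < Vv a b) :
    validP x (phiT x τ (((a,b),(c,d)), ((a,B),(d,D)))) ∧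
    nxtP (nxtP x (phiT x τ (((a,b),(c,d)), ((a,B),(d,D)))).1)
        (phiT x τ (((a,b),(c,d)), ((a,B),(d,D)))).2
      = nxtP (nxtP x ((a,b),(c,d))) ((a,B),(d,D)) ∧
    (∀ i, owtP τ (phiT x τ (((a,b),(c,d)), ((a,B),(d,D)))).1 i
        + owtP τ (phiT x τ (((a,b),(c,d)), ((a,B),(d,D)))).2 i
        = owtP τ ((a,b),(c,d)) i + owtP τ ((a,B),(d,D)) i) ∧
    phiT x τ (phiT x τ (((a,b),(c,d)), ((a,B),(d,D)))) = (((a,b),(c,d)), ((a,B),(d,D))) ∧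
    phiT x τ (((a,b),(c,d)), ((a,B),(d,D))) ≠ (((a,b),(c,d)), ((a,B),(d,D))) := by
  have hcD : c ≠ D := fun h => haB (x.injective (by rw [hxa, hxB, h]))
  have hzcd : Vv c d ≠ 0 := Vv_ne hcd
  have hzcD : Vv c D ≠ 0 := Vv_ne hcD
  have hzdD : Vv d D ≠ 0 := Vv_ne hdD
  have hzab : Vv a b ≠ 0 := Vv_ne hab
  have hzbB : Vv b B ≠ 0 := Vv_ne hbB
  have hzBb : Vv B b ≠ 0 := Vv_ne (Ne.symm hbB)
  have hzaB : Vv a B ≠ 0 := Vv_ne haB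
  have bab := Vv_lt a b; have baB := Vv_lt a B; have bBb := Vv_lt B b
  have bcd := Vv_lt c d; have bcD := Vv_lt c D; have bdD := Vv_lt d D
  have ccd := Vv_comm hcd
  have cab := Vv_comm hab
  have colEq : Vv a b = Vv a B + Vv B b := by
    have t1 := Vv_rel a B b
    omega
  have rowEq : Vv c D = Vv c d + Vv d D := by
    have hE1B := E1 B
    rw [hxB] at hE1B
    simp only [intP_mk] at hE1B
    have t1 := Vv_rel c d D
    omega
  have hncond : ¬ Vv a b < Vv a B := by omega
  have hphi : phiT x τ (((a,b),(c,d)), ((a,B),(d,D)))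
      = (((a,B),(c,D)), ((B,b),(c,d))) := by
    simp [phiT, hbB.symm, hab, Ne.symm haB, hncond]
  rw [hphi]
  have empt1 : ∀ i, ¬ intP ((a,B),(c,D)) i (x i) := by
    intro i
    rcases eq_or_ne i a with h | hia
    · rw [h, hxa]
      simp only [intP_mk]
      have := Vv_self a
      intro H
      omega
    rcases eq_or_ne i B with h | hiB
    · rw [h, hxB]
      simp only [intP_mk]
      intro H
      omega
    rcases eq_or_ne i b with h | hib
    · rw [h, hxb]
      simp only [intP_mk]
      intro H
      omega
    · have hE1 := E1 i
      have hE2 := E2g i hia hib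
      simp only [intP_mk] at hE1 hE2 ⊢
      intro H
      have t2 := Vv_rel c d (x i)
      have hne : Vv c (x i) ≠ Vv c d := fun h => hib (x.injective (show x i = x b by
        rw [hxb]; exact Vv_inj h))
      have b3 := Vv_lt c (x i); have b4 := Vv_lt d (x i)
      omega
  have empt2 : ∀ i, ¬ intP ((B,b),(c,d)) i ((x * Equiv.swap a B) i) := by
    apply empt_swap_intro
    · intro i hia hiB
      rcases eq_or_ne i b with h | hib
      · rw [h, hxb]
        simp only [intP_mk]
        have := Vv_self b
        intro H
        omega
      · have hE1 := E1 i
        simp only [intP_mk] at hE1 ⊢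
        intro H
        have t1 := Vv_rel a B i
        have b1 := Vv_lt a i; have b2 := Vv_lt B i
        omega
    · rw [hxB]
      simp only [intP_mk]
      intro H
      omega
    · rw [hxa]
      simp only [intP_mk]
      have := Vv_self B
      intro H
      omega
  refine ⟨⟨⟨haB, hcD, hxa, hxB, empt1⟩, Ne.symm hbB, hcd, ?_, ?_, empt2⟩, ?_, ?_, ?_, ?_⟩
  · show (x * Equiv.swap a B) B = c
    rw [mulswap_right]; exact hxa
  · show (x * Equiv.swap a B) b = d
    rw [mulswap_other x (Ne.symm hab) hbB]; exact hxb
  · show x * Equiv.swap a B * Equiv.swap B b = x * Equiv.swap a b * Equiv.swap a B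
    have e2 := cyc_13 haB (Ne.symm hbB) hab
    rw [mul_assoc, mul_assoc, e2]
  · intro i
    simp only [owtP, cellP_mk]
    have t1 := Vv_rel a B i
    have t2 := Vv_rel c d (τ i)
    have b1 := Vv_lt a i; have b2 := Vv_lt B i
    have b3 := Vv_lt c (τ i); have b4 := Vv_lt d (τ i)
    split_ifs <;> omega
  · have hncond3 : ¬ Vv c D < Vv c d := by omega
    have hphi2 : phiT x τ (((a,B),(c,D)), ((B,b),(c,d)))
        = (((a,b),(c,d)), ((a,B),(d,D))) := by
      simp [phiT, Ne.symm haB, Ne.symm hab, hncond3]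
    exact hphi2
  · intro heq
    exact hbB.symm (congrArg (fun t => t.1.1.2) heq)
end Spec5
section Spec6
variable {n : ℕ} [NeZero n]

lemma spec6T (x τ : Equiv.Perm (ZMod n)) (a b c d A C : ZMod n)
    (hab : a ≠ b) (hcd : c ≠ d) (hAa : A ≠ a) (hAb : A ≠ b) (hCc : C ≠ c)
    (hxa : x a = c) (hxb : x b = d) (hxA : x A = C)
    (E1 : ∀ i, ¬ intP ((a,b),(c,d)) i (x i))
    (E2g : ∀ i, i ≠ a → i ≠ b → ¬ intP ((A,b),(C,c)) i (x i))
    (E2a : ¬ intP ((A,b),(C,c)) a d)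
    (hcond : Vv A a < Vv A b) :
    validP x (phiT x τ (((a,b),(c,d)), ((A,b),(C,c)))) ∧
    nxtP (nxtP x (phiT x τ (((a,b),(c,d)), ((A,b),(C,c)))).1)
        (phiT x τ (((a,b),(c,d)), ((A,b),(C,c)))).2
      = nxtP (nxtP x ((a,b),(c,d))) ((A,b),(C,c)) ∧
    (∀ i, owtP τ (phiT x τ (((a,b),(c,d)), ((A,b),(C,c)))).1 i
        + owtP τ (phiT x τ (((a,b),(c,d)), ((A,b),(C,c)))).2 i
        = owtP τ ((a,b),(c,d)) i + owtP τ ((A,b),(C,c)) i) ∧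
    phiT x τ (phiT x τ (((a,b),(c,d)), ((A,b),(C,c)))) = (((a,b),(c,d)), ((A,b),(C,c))) ∧
    phiT x τ (((a,b),(c,d)), ((A,b),(C,c))) ≠ (((a,b),(c,d)), ((A,b),(C,c))) := by
  have hCd : C ≠ d := fun h => hAb (x.injective (by rw [hxb, hxA, h]))
  have hcC : c ≠ C := Ne.symm hCc
  have hzcd : Vv c d ≠ 0 := Vv_ne hcd
  have hzCc : Vv C c ≠ 0 := Vv_ne hCc
  have hzCd : Vv C d ≠ 0 := Vv_ne hCd
  have hzab : Vv a b ≠ 0 := Vv_ne hab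
  have hzAa : Vv A a ≠ 0 := Vv_ne hAa
  have hzAb : Vv A b ≠ 0 := Vv_ne hAb
  have bab := Vv_lt a b; have bAa := Vv_lt A a; have bAb := Vv_lt A b
  have baA := Vv_lt a A
  have bcd := Vv_lt c d; have bCc := Vv_lt C c; have bCd := Vv_lt C d
  have ccd := Vv_comm hcd
  have cab := Vv_comm hab
  have caA := Vv_comm (Ne.symm hAa)
  have colEq : Vv A b = Vv A a + Vv a b := by
    have t1 := Vv_rel A a b
    omega
  have rowEq : Vv C d = Vv C c + Vv c d := by
    have hE2a := E2a
    simp only [intP_mk] at hE2a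
    have t1 := Vv_rel C c d
    omega
  have hphi : phiT x τ (((a,b),(c,d)), ((A,b),(C,c)))
      = (((A,a),(C,c)), ((a,b),(C,d))) := by
    simp [phiT, hAa, hAb, Ne.symm hab, hcond]
  rw [hphi]
  have empt1 : ∀ i, ¬ intP ((A,a),(C,c)) i (x i) := by
    intro i
    rcases eq_or_ne i A with h | hiA
    · rw [h, hxA]
      simp only [intP_mk]
      have := Vv_self C
      intro H
      omega
    rcases eq_or_ne i a with h | hia
    · rw [h, hxa]
      simp only [intP_mk]
      intro H
      omega
    rcases eq_or_ne i b with h | hib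
    · rw [h, hxb]
      simp only [intP_mk]
      intro H
      omega
    · have hE2 := E2g i hia hib
      simp only [intP_mk] at hE2 ⊢
      intro H
      omega
  have empt2 : ∀ i, ¬ intP ((a,b),(C,d)) i ((x * Equiv.swap A a) i) := by
    apply empt_swap_intro
    · intro i hiA hia
      rcases eq_or_ne i b with h | hib
      · rw [h, hxb]
        simp only [intP_mk]
        intro H
        omega
      · have hE1 := E1 i
        have hE2 := E2g i hia hib
        simp only [intP_mk] at hE1 hE2 ⊢
        intro H
        have t1 := Vv_rel A a i
        have t2 := Vv_rel C c (x i)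
        have hne : Vv C (x i) ≠ Vv C c := fun h => hia (x.injective (show x i = x a by
          rw [hxa]; exact Vv_inj h))
        have b1 := Vv_lt A i; have b2 := Vv_lt a i
        have b3 := Vv_lt C (x i); have b4 := Vv_lt c (x i)
        omega
    · rw [hxa]
      simp only [intP_mk]
      intro H
      omega
    · rw [hxA]
      simp only [intP_mk]
      have := Vv_self a
      intro H
      omega
  refine ⟨⟨⟨hAa, hCc, hxA, hxa, empt1⟩, hab, hCd, ?_, ?_, empt2⟩, ?_, ?_, ?_, ?_⟩
  · show (x * Equiv.swap A a) a = C
    rw [mulswap_right]; exact hxA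
  · show (x * Equiv.swap A a) b = d
    rw [mulswap_other x (Ne.symm hAb) (Ne.symm hab)]; exact hxb
  · show x * Equiv.swap A a * Equiv.swap a b = x * Equiv.swap a b * Equiv.swap A b
    have e2 := cyc_13 hab (Ne.symm hAb) (Ne.symm hAa)
    rw [mul_assoc, mul_assoc, Equiv.swap_comm A a, ← e2, Equiv.swap_comm b A]
  · intro i
    simp only [owtP, cellP_mk]
    have t1 := Vv_rel A a i
    have t2 := Vv_rel C c (τ i)
    have b1 := Vv_lt A i; have b2 := Vv_lt a i
    have b3 := Vv_lt C (τ i); have b4 := Vv_lt c (τ i)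
    split_ifs <;> omega
  · have hcond3 : Vv C c < Vv C d := by omega
    have hphi2 : phiT x τ (((A,a),(C,c)), ((a,b),(C,d)))
        = (((a,b),(c,d)), ((A,b),(C,c))) := by
      simp [phiT, Ne.symm hAa, Ne.symm hAb, hcond3]
    exact hphi2
  · intro heq
    exact hAa (congrArg (fun t => t.1.1.1) heq)

lemma spec6F (x τ : Equiv.Perm (ZMod n)) (a b c d A C : ZMod n)
    (hab : a ≠ b) (hcd : c ≠ d) (hAa : A ≠ a) (hAb : A ≠ b) (hCc : C ≠ c)
    (hxa : x a = c) (hxb : x b = d) (hxA : x A = C)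
    (E1 : ∀ i, ¬ intP ((a,b),(c,d)) i (x i))
    (E2g : ∀ i, i ≠ a → i ≠ b → ¬ intP ((A,b),(C,c)) i (x i))
    (hcond : Vv A b < Vv A a) :
    validP x (phiT x τ (((a,b),(c,d)), ((A,b),(C,c)))) ∧
    nxtP (nxtP x (phiT x τ (((a,b),(c,d)), ((A,b),(C,c)))).1)
        (phiT x τ (((a,b),(c,d)), ((A,b),(C,c)))).2
      = nxtP (nxtP x ((a,b),(c,d))) ((A,b),(C,c)) ∧
    (∀ i, owtP τ (phiT x τ (((a,b),(c,d)), ((A,b),(C,c)))).1 i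
        + owtP τ (phiT x τ (((a,b),(c,d)), ((A,b),(C,c)))).2 i
        = owtP τ ((a,b),(c,d)) i + owtP τ ((A,b),(C,c)) i) ∧
    phiT x τ (phiT x τ (((a,b),(c,d)), ((A,b),(C,c)))) = (((a,b),(c,d)), ((A,b),(C,c))) ∧
    phiT x τ (((a,b),(c,d)), ((A,b),(C,c))) ≠ (((a,b),(c,d)), ((A,b),(C,c))) := by
  have hCd : C ≠ d := fun h => hAb (x.injective (by rw [hxb, hxA, h]))
  have hcC : c ≠ C := Ne.symm hCc
  have hdC : d ≠ C := Ne.symm hCd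
  have hzcd : Vv c d ≠ 0 := Vv_ne hcd
  have hzdc : Vv d c ≠ 0 := Vv_ne (Ne.symm hcd)
  have hzCc : Vv C c ≠ 0 := Vv_ne hCc
  have hzcC : Vv c C ≠ 0 := Vv_ne hcC
  have hzCd : Vv C d ≠ 0 := Vv_ne hCd
  have hzdC : Vv d C ≠ 0 := Vv_ne hdC
  have hzab : Vv a b ≠ 0 := Vv_ne hab
  have hzba : Vv b a ≠ 0 := Vv_ne (Ne.symm hab)
  have hzAa : Vv A a ≠ 0 := Vv_ne hAa
  have hzaA : Vv a A ≠ 0 := Vv_ne (Ne.symm hAa)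
  have hzAb : Vv A b ≠ 0 := Vv_ne hAb
  have hzbA : Vv b A ≠ 0 := Vv_ne (Ne.symm hAb)
  have bab := Vv_lt a b; have bAa := Vv_lt A a; have bAb := Vv_lt A b
  have baA := Vv_lt a A; have bba := Vv_lt b a; have bbA := Vv_lt b A
  have bcd := Vv_lt c d; have bCc := Vv_lt C c; have bCd := Vv_lt C d
  have bcC := Vv_lt c C; have bdc := Vv_lt d c; have bdC := Vv_lt d C
  have ccd := Vv_comm hcd
  have ccC := Vv_comm hcC
  have cdC := Vv_comm hdC
  have cab := Vv_comm hab
  have caA := Vv_comm (Ne.symm hAa)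
  have cbA := Vv_comm (Ne.symm hAb)
  have colEq : Vv A a = Vv A b + Vv b a := by
    have t1 := Vv_rel A b a
    omega
  have rowFact : Vv c C = Vv c d + Vv d C := by
    have hE1A := E1 A
    rw [hxA] at hE1A
    simp only [intP_mk] at hE1A
    have t1 := Vv_rel c d C
    omega
  have hncond : ¬ Vv A a < Vv A b := by omega
  have hphi : phiT x τ (((a,b),(c,d)), ((A,b),(C,c)))
      = (((A,b),(C,d)), ((a,A),(c,d))) := by
    simp [phiT, hAa, hAb, Ne.symm hab, hncond]
  rw [hphi]
  have empt1 : ∀ i, ¬ intP ((A,b),(C,d)) i (x i) := by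
    intro i
    rcases eq_or_ne i A with h | hiA
    · rw [h, hxA]
      simp only [intP_mk]
      have := Vv_self C
      intro H
      omega
    rcases eq_or_ne i b with h | hib
    · rw [h, hxb]
      simp only [intP_mk]
      intro H
      omega
    rcases eq_or_ne i a with h | hia
    · rw [h, hxa]
      simp only [intP_mk]
      intro H
      omega
    · have hE1 := E1 i
      have hE2 := E2g i hia hib
      simp only [intP_mk] at hE1 hE2 ⊢
      intro H
      have t1 := Vv_rel A a i
      have t2 := Vv_rel C c (x i)
      have hne : Vv C (x i) ≠ Vv C c := fun h => hia (x.injective (show x i = x a by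
        rw [hxa]; exact Vv_inj h))
      have b1 := Vv_lt A i; have b2 := Vv_lt a i
      have b3 := Vv_lt C (x i); have b4 := Vv_lt c (x i)
      omega
  have empt2 : ∀ i, ¬ intP ((a,A),(c,d)) i ((x * Equiv.swap A b) i) := by
    apply empt_swap_intro
    · intro i hiA hib
      rcases eq_or_ne i a with h | hia
      · rw [h, hxa]
        simp only [intP_mk]
        have := Vv_self a
        intro H
        omega
      · have hE1 := E1 i
        simp only [intP_mk] at hE1 ⊢
        intro H
        have t1 := Vv_rel a A i
        have b1 := Vv_lt a i; have b2 := Vv_lt A i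
        omega
    · rw [hxb]
      simp only [intP_mk]
      intro H
      omega
    · rw [hxA]
      simp only [intP_mk]
      intro H
      omega
  refine ⟨⟨⟨hAb, hCd, hxA, hxb, empt1⟩, Ne.symm hAa, hcd, ?_, ?_, empt2⟩, ?_, ?_, ?_, ?_⟩
  · show (x * Equiv.swap A b) a = c
    rw [mulswap_other x (Ne.symm hAa) hab]; exact hxa
  · show (x * Equiv.swap A b) A = d
    rw [mulswap_left]; exact hxb
  · show x * Equiv.swap A b * Equiv.swap a A = x * Equiv.swap a b * Equiv.swap A b
    have e1 := cyc_12 hab (Ne.symm hAb) (Ne.symm hAa)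
    rw [mul_assoc, mul_assoc, Equiv.swap_comm A b, ← e1]
  · intro i
    simp only [owtP, cellP_mk]
    have t1 := Vv_rel A a i
    have t2 := Vv_rel C c (τ i)
    have b1 := Vv_lt A i; have b2 := Vv_lt a i
    have b3 := Vv_lt C (τ i); have b4 := Vv_lt c (τ i)
    split_ifs <;> omega
  · have hncond4 : ¬ Vv c C < Vv c d := by omega
    have hphi2 : phiT x τ (((A,b),(C,d)), ((a,A),(c,d)))
        = (((a,b),(c,d)), ((A,b),(C,c))) := by
      simp [phiT, Ne.symm hAa, hab, hAb.symm, hncond4]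
    exact hphi2
  · intro heq
    exact hAa (congrArg (fun t => t.1.1.1) heq)
end Spec6
section Spec7
variable {n : ℕ} [NeZero n]

lemma spec7 (x τ : Equiv.Perm (ZMod n)) (a b c d A B C D : ZMod n)
    (hab : a ≠ b) (hcd : c ≠ d) (hAB : A ≠ B) (hCD : C ≠ D)
    (hAa : A ≠ a) (hAb : A ≠ b) (hBa : B ≠ a) (hBb : B ≠ b)
    (hxa : x a = c) (hxb : x b = d) (hxA : x A = C) (hxB : x B = D)
    (E1 : ∀ i, ¬ intP ((a,b),(c,d)) i (x i))
    (E2g : ∀ i, i ≠ a → i ≠ b → ¬ intP ((A,B),(C,D)) i (x i))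
    (E2a : ¬ intP ((A,B),(C,D)) a d) (E2b : ¬ intP ((A,B),(C,D)) b c) :
    validP x (phiT x τ (((a,b),(c,d)), ((A,B),(C,D)))) ∧
    nxtP (nxtP x (phiT x τ (((a,b),(c,d)), ((A,B),(C,D)))).1)
        (phiT x τ (((a,b),(c,d)), ((A,B),(C,D)))).2
      = nxtP (nxtP x ((a,b),(c,d))) ((A,B),(C,D)) ∧
    (∀ i, owtP τ (phiT x τ (((a,b),(c,d)), ((A,B),(C,D)))).1 i
        + owtP τ (phiT x τ (((a,b),(c,d)), ((A,B),(C,D)))).2 i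
        = owtP τ ((a,b),(c,d)) i + owtP τ ((A,B),(C,D)) i) ∧
    phiT x τ (phiT x τ (((a,b),(c,d)), ((A,B),(C,D)))) = (((a,b),(c,d)), ((A,B),(C,D))) ∧
    phiT x τ (((a,b),(c,d)), ((A,B),(C,D))) ≠ (((a,b),(c,d)), ((A,B),(C,D))) := by
  have hcC : c ≠ C := fun h => hAa (x.injective (by rw [hxa, hxA, h])).symm
  have hcD : c ≠ D := fun h => hBa (x.injective (by rw [hxa, hxB, h])).symm
  have hdC : d ≠ C := fun h => hAb (x.injective (by rw [hxb, hxA, h])).symm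
  have hdD : d ≠ D := fun h => hBb (x.injective (by rw [hxb, hxB, h])).symm
  have hzab : Vv a b ≠ 0 := Vv_ne hab
  have hzaA : Vv a A ≠ 0 := Vv_ne (Ne.symm hAa)
  have hzAa : Vv A a ≠ 0 := Vv_ne hAa
  have hzAb : Vv A b ≠ 0 := Vv_ne hAb
  have hzaB : Vv a B ≠ 0 := Vv_ne (Ne.symm hBa)
  have hzcd : Vv c d ≠ 0 := Vv_ne hcd
  have hzcC : Vv c C ≠ 0 := Vv_ne hcC
  have hzCc : Vv C c ≠ 0 := Vv_ne (Ne.symm hcC)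
  have hzCd : Vv C d ≠ 0 := Vv_ne (Ne.symm hdC)
  have hzcD : Vv c D ≠ 0 := Vv_ne hcD
  have hne1 : Vv c d ≠ Vv c D := fun h => hdD (Vv_inj h)
  have hne2 : Vv a b ≠ Vv a B := fun h => hBb (Vv_inj h).symm
  have hne3 : Vv A b ≠ Vv A B := fun h => hBb (Vv_inj h).symm
  have hne4 : Vv C d ≠ Vv C D := fun h => hdD (Vv_inj h)
  have caA := Vv_comm (Ne.symm hAa)
  have ccC := Vv_comm hcC
  have bAa := Vv_lt A a; have bAb := Vv_lt A b; have bAB := Vv_lt A B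
  have bab := Vv_lt a b; have baB := Vv_lt a B; have baA := Vv_lt a A
  have bCc := Vv_lt C c; have bCd := Vv_lt C d; have bCD := Vv_lt C D
  have bcd := Vv_lt c d; have bcD := Vv_lt c D; have bcC := Vv_lt c C
  have hE1A := E1 A; rw [hxA] at hE1A
  have hE1B := E1 B; rw [hxB] at hE1B
  simp only [intP_mk] at hE1A hE1B E2a E2b
  have G1 : ∀ i, ¬ intP ((A,B),(C,D)) i (x i) := by
    intro i
    rcases eq_or_ne i a with h | hia
    · rw [h, hxa]
      simp only [intP_mk]
      intro H
      have t1 := Vv_rel A a b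
      have t2 := Vv_rel A a B
      have t3 := Vv_rel C c d
      have t4 := Vv_rel C c D
      omega
    rcases eq_or_ne i b with h | hib
    · rw [h, hxb]
      simp only [intP_mk]
      intro H
      have t1 := Vv_rel A a b
      have t3 := Vv_rel C c d
      omega
    · exact E2g i hia hib
  have G2A : ¬ intP ((a,b),(c,d)) A D := by
    simp only [intP_mk]
    intro H
    have t1 := Vv_rel c C D
    have t2 := Vv_rel a A b
    have t3 := Vv_rel a A B
    omega
  have G2B : ¬ intP ((a,b),(c,d)) B C := by
    simp only [intP_mk]
    intro H
    have t1 := Vv_rel c C d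
    have t2 := Vv_rel c C D
    have t3 := Vv_rel a A B
    omega
  have hphi : phiT x τ (((a,b),(c,d)), ((A,B),(C,D)))
      = (((A,B),(C,D)), ((a,b),(c,d))) := by
    simp [phiT, hAa, hAb, hBa, hBb]
  rw [hphi]
  have empt2 : ∀ i, ¬ intP ((a,b),(c,d)) i ((x * Equiv.swap A B) i) := by
    apply empt_swap_intro
    · intro i hiA hiB
      exact E1 i
    · rw [hxB]; exact G2A
    · rw [hxA]; exact G2B
  refine ⟨⟨⟨hAB, hCD, hxA, hxB, G1⟩, hab, hcd, ?_, ?_, empt2⟩, ?_, ?_, ?_, ?_⟩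
  · show (x * Equiv.swap A B) a = c
    rw [mulswap_other x (Ne.symm hAa) (Ne.symm hBa)]; exact hxa
  · show (x * Equiv.swap A B) b = d
    rw [mulswap_other x (Ne.symm hAb) (Ne.symm hBb)]; exact hxb
  · show x * Equiv.swap A B * Equiv.swap a b = x * Equiv.swap a b * Equiv.swap A B
    rw [mul_assoc, mul_assoc, swap_disj hAa hAb hBa hBb]
  · intro i
    exact Nat.add_comm _ _
  · have hphi2 : phiT x τ (((A,B),(C,D)), ((a,b),(c,d)))
        = (((a,b),(c,d)), ((A,B),(C,D))) := by
      simp [phiT, Ne.symm hAa, Ne.symm hAb, Ne.symm hBa, Ne.symm hBb]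
    exact hphi2
  · intro heq
    exact hAa (congrArg (fun t => t.1.1.1) heq)
end Spec7
theorem phiT_spec {n : ℕ} [NeZero n] (x τ : Equiv.Perm (ZMod n)) (p : QQ n × QQ n)
    (h : validP x p) :
    validP x (phiT x τ p) ∧
    nxtP (nxtP x (phiT x τ p).1) (phiT x τ p).2 = nxtP (nxtP x p.1) p.2 ∧
    (∀ i, owtP τ (phiT x τ p).1 i + owtP τ (phiT x τ p).2 i
        = owtP τ p.1 i + owtP τ p.2 i) ∧
    phiT x τ (phiT x τ p) = p ∧ phiT x τ p ≠ p := by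
  obtain ⟨⟨⟨a, b⟩, c, d⟩, ⟨⟨A, B⟩, C, D⟩⟩ := p
  obtain ⟨⟨hab, hcd, hxa, hxb, E1⟩, hAB, hCD, hyA, hyB, E2⟩ := h
  have hyA' : (x * Equiv.swap a b) A = C := hyA
  have hyB' : (x * Equiv.swap a b) B = D := hyB
  have E2' : ∀ i, ¬ intP ((A,B),(C,D)) i ((x * Equiv.swap a b) i) := E2
  clear hyA hyB E2
  by_cases hc1 : A = a ∧ B = b
  · have h1 : a = A := hc1.1.symm
    have h2 : b = B := hc1.2.symm
    subst h1; subst h2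
    have hC : d = C := by rw [← hyA', mulswap_left, hxb]
    have hD : c = D := by rw [← hyB', mulswap_right, hxa]
    subst hC; subst hD
    have E2g : ∀ i, i ≠ a → i ≠ b → ¬ intP ((a,b),(d,c)) i (x i) := fun i hia hib => by
      have := E2' i; rwa [mulswap_other x hia hib] at this
    exact specV x τ a b c d hab hcd hxa hxb E1 E2g
  by_cases hc2 : A = b ∧ B = a
  · have h1 : b = A := hc2.1.symm
    have h2 : a = B := hc2.2.symm
    subst h1; subst h2
    have hC : c = C := by rw [← hyA', mulswap_right, hxa]
    have hD : d = D := by rw [← hyB', mulswap_left, hxb]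
    subst hC; subst hD
    have E2g : ∀ i, i ≠ a → i ≠ b → ¬ intP ((b,a),(c,d)) i (x i) := fun i hia hib => by
      have := E2' i; rwa [mulswap_other x hia hib] at this
    exact specH x τ a b c d hab hcd hxa hxb E1 E2g
  by_cases hc3 : A = b
  · have h3 : b = A := hc3.symm
    subst h3
    have hBa : B ≠ a := fun hh => hc2 ⟨rfl, hh⟩
    have hbB : b ≠ B := hAB
    have hC : c = C := by rw [← hyA', mulswap_right, hxa]
    subst hC
    have hxB : x B = D := by rw [← hyB', mulswap_other x hBa (Ne.symm hbB)]
    have hcD : c ≠ D := fun hh => hBa (x.injective (by rw [hxa, hxB, hh])).symm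
    have E2g : ∀ i, i ≠ a → i ≠ b → ¬ intP ((b,B),(c,D)) i (x i) := fun i hia hib => by
      have := E2' i; rwa [mulswap_other x hia hib] at this
    rcases lt_or_ge (Vv c d) (Vv c D) with hlt | hge
    · have E2a : ¬ intP ((b,B),(c,D)) a d := by
        have := E2' a; rwa [mulswap_left, hxb] at this
      exact spec3a x τ a b c d B D hab hcd hbB hcD hBa hxa hxb hxB E1 E2g E2a hlt
    · have hdD : d ≠ D := fun hh => hbB (x.injective (by rw [hxb, hxB, hh]))
      have hne : Vv c D ≠ Vv c d := fun hh => hdD (Vv_inj hh).symm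
      have hlt2 : Vv c D < Vv c d := by omega
      exact spec3b x τ a b c d B D hab hcd hbB hcD hBa hxa hxb hxB E1 E2g hlt2
  by_cases hc4 : B = a
  · have h4 : a = B := hc4.symm
    subst h4
    have hAa : A ≠ a := hAB
    have hAb : A ≠ b := hc3
    have hD : d = D := by rw [← hyB', mulswap_left, hxb]
    subst hD
    have hxA : x A = C := by rw [← hyA', mulswap_other x hAa hAb]
    have hCd : C ≠ d := hCD
    have E2g : ∀ i, i ≠ a → i ≠ b → ¬ intP ((A,a),(C,d)) i (x i) := fun i hia hib => by
      have := E2' i; rwa [mulswap_other x hia hib] at this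
    rcases lt_or_ge (Vv C c) (Vv C d) with hlt | hge
    · have E2b : ¬ intP ((A,a),(C,d)) b c := by
        have := E2' b; rwa [mulswap_right, hxa] at this
      exact spec4T x τ a b c d A C hab hcd hAa hAb hCd hxa hxb hxA E1 E2g E2b hlt
    · have hne : Vv C d ≠ Vv C c := fun hh => hcd (Vv_inj hh).symm
      have hlt2 : Vv C d < Vv C c := by omega
      exact spec4F x τ a b c d A C hab hcd hAa hAb hCd hxa hxb hxA E1 E2g hlt2
  by_cases hc5 : A = a
  · have h5 : a = A := hc5.symm
    subst h5
    have haB : a ≠ B := hAB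
    have hBb : B ≠ b := fun hh => hc1 ⟨rfl, hh⟩
    have hbB : b ≠ B := Ne.symm hBb
    have hC : d = C := by rw [← hyA', mulswap_left, hxb]
    subst hC
    have hxB : x B = D := by rw [← hyB', mulswap_other x hc4 hBb]
    have hdD : d ≠ D := hCD
    have E2g : ∀ i, i ≠ a → i ≠ b → ¬ intP ((a,B),(d,D)) i (x i) := fun i hia hib => by
      have := E2' i; rwa [mulswap_other x hia hib] at this
    rcases lt_or_ge (Vv a b) (Vv a B) with hlt | hge
    · have E2b : ¬ intP ((a,B),(d,D)) b c := by
        have := E2' b; rwa [mulswap_right, hxa] at this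
      exact spec5T x τ a b c d B D hab hcd haB hbB hdD hxa hxb hxB E1 E2g E2b hlt
    · have hne : Vv a B ≠ Vv a b := fun hh => hBb (Vv_inj hh)
      have hlt2 : Vv a B < Vv a b := by omega
      exact spec5F x τ a b c d B D hab hcd haB hbB hdD hxa hxb hxB E1 E2g hlt2
  by_cases hc6 : B = b
  · have h6 : b = B := hc6.symm
    subst h6
    have hAb : A ≠ b := hAB
    have hAa : A ≠ a := hc5
    have hD : c = D := by rw [← hyB', mulswap_right, hxa]
    subst hD
    have hxA : x A = C := by rw [← hyA', mulswap_other x hAa hAb]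
    have hCc : C ≠ c := hCD
    have E2g : ∀ i, i ≠ a → i ≠ b → ¬ intP ((A,b),(C,c)) i (x i) := fun i hia hib => by
      have := E2' i; rwa [mulswap_other x hia hib] at this
    rcases lt_or_ge (Vv A a) (Vv A b) with hlt | hge
    · have E2a : ¬ intP ((A,b),(C,c)) a d := by
        have := E2' a; rwa [mulswap_left, hxb] at this
      exact spec6T x τ a b c d A C hab hcd hAa hAb hCc hxa hxb hxA E1 E2g E2a hlt
    · have hne : Vv A b ≠ Vv A a := fun hh => hab (Vv_inj hh).symm
      have hlt2 : Vv A b < Vv A a := by omega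
      exact spec6F x τ a b c d A C hab hcd hAa hAb hCc hxa hxb hxA E1 E2g hlt2
  · have hAa : A ≠ a := hc5
    have hAb : A ≠ b := hc3
    have hBa : B ≠ a := hc4
    have hBb : B ≠ b := hc6
    have hxA : x A = C := by rw [← hyA', mulswap_other x hAa hAb]
    have hxB : x B = D := by rw [← hyB', mulswap_other x hBa hBb]
    have E2g : ∀ i, i ≠ a → i ≠ b → ¬ intP ((A,B),(C,D)) i (x i) := fun i hia hib => by
      have := E2' i; rwa [mulswap_other x hia hib] at this
    have E2a : ¬ intP ((A,B),(C,D)) a d := by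
      have := E2' a; rwa [mulswap_left, hxb] at this
    have E2b : ¬ intP ((A,B),(C,D)) b c := by
      have := E2' b; rwa [mulswap_right, hxa] at this
    exact spec7 x τ a b c d A B C D hab hcd hAB hCD hAa hAb hBa hBb
      hxa hxb hxA hxB E1 E2g E2a E2b

-- ===== gluing =====
section Glue
variable {n : ℕ} [NeZero n] (x τ : Equiv.Perm (ZMod n))

lemma Hits_iff (x : Equiv.Perm (ZMod n)) (r : GRect n) : Hits x r ↔ hitsP x r.1 := by
  unfold Hits hitsP Empt InteriorPt intP GRect.a GRect.b GRect.c GRect.d Vv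
  constructor
  · rintro ⟨h1, h2, h3⟩; exact ⟨r.2.1, r.2.2, h1, h2, h3⟩
  · rintro ⟨_, _, h1, h2, h3⟩; exact ⟨h1, h2, h3⟩

lemma next_eq (x : Equiv.Perm (ZMod n)) (r : GRect n) : next x r = nxtP x r.1 := rfl

lemma Owt_eq (τ : Equiv.Perm (ZMod n)) (r : GRect n) : Owt τ r = owtP τ r.1 := rfl

noncomputable def phiG (x τ : Equiv.Perm (ZMod n)) (p : GRect n × GRect n) :
    GRect n × GRect n :=
  if h : validP x (p.1.1, p.2.1) then
    (⟨(phiT x τ (p.1.1, p.2.1)).1,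
       (phiT_spec x τ _ h).1.1.1, (phiT_spec x τ _ h).1.1.2.1⟩,
     ⟨(phiT x τ (p.1.1, p.2.1)).2,
       (phiT_spec x τ _ h).1.2.1, (phiT_spec x τ _ h).1.2.2.1⟩)
  else p

lemma delta_add (f g : GC n) : delta τ (f + g) = delta τ f + delta τ g := by
  unfold delta
  apply Finsupp.sum_add_index
  · intro b _; simp
  · intro b _ c1 c2
    rw [← Finset.sum_add_distrib]
    apply Finset.sum_congr rfl
    intro r _
    split_ifs with h
    · rw [Finsupp.single_add]
    · simp

noncomputable def deltaHom (τ : Equiv.Perm (ZMod n)) : GC n →+ GC n :=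
  AddMonoidHom.mk' (delta τ) (delta_add τ)

lemma delta_zero : delta τ (0 : GC n) = 0 := Finsupp.sum_zero_index

lemma delta_single (b : GBasis n) (cf : ZMod 2) :
    delta τ (Finsupp.single b cf) =
      ∑ r : GRect n, if Hits b.1 r then
        Finsupp.single (next b.1 r, fun i => b.2 i + Owt τ r i) cf else 0 := by
  unfold delta
  apply Finsupp.sum_single_index
  simp

end Glue

/-- `∂⁻ ∘ ∂⁻ = 0` for the grid complex over `𝔽₂`. -/
theorem delta_delta (n : ℕ) [NeZero n] (τ : Equiv.Perm (ZMod n)) (f : GC n) :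
    delta τ (delta τ f) = 0 := by
  induction f using Finsupp.induction_linear with
  | zero => rw [delta_zero, delta_zero]
  | add f g hf hg => rw [delta_add, delta_add, hf, hg, add_zero]
  | single b cf =>
    obtain ⟨x, m⟩ := b
    rw [delta_single]
    rw [show delta τ (∑ r : GRect n, if Hits (x, m).1 r then
          Finsupp.single (next (x, m).1 r, fun i => (x, m).2 i + Owt τ r i) cf else 0)
        = ∑ r1 : GRect n, delta τ (if Hits (x, m).1 r1 then
          Finsupp.single (next (x, m).1 r1, fun i => (x, m).2 i + Owt τ r1 i) cf else 0)
      from map_sum (deltaHom τ) _ _]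
    have step : ∀ r1 : GRect n,
        delta τ (if Hits (x, m).1 r1 then
          Finsupp.single (next (x, m).1 r1, fun i => (x, m).2 i + Owt τ r1 i) cf else 0)
        = ∑ r2 : GRect n,
            if Hits x r1 then (if Hits (next x r1) r2 then
              Finsupp.single (next (next x r1) r2,
                fun i => m i + Owt τ r1 i + Owt τ r2 i) cf else 0) else 0 := by
      intro r1
      by_cases h1 : Hits x r1
      · rw [if_pos h1, delta_single]
        apply Finset.sum_congr rfl
        intro r2 _
        rw [if_pos h1]
      · rw [if_neg h1, delta_zero]
        symm
        apply Finset.sum_eq_zero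
        intro r2 _
        rw [if_neg h1]
    simp only [step]
    rw [← Finset.sum_product']
    apply Finset.sum_involution (fun p _ => phiG x τ p)
    · -- f p + f (phiG p) = 0
      intro p _
      by_cases hv : validP x (p.1.1, p.2.1)
      · have hs := phiT_spec x τ _ hv
        have hH1 : Hits x p.1 := (Hits_iff x p.1).2 hv.1
        have hH2 : Hits (next x p.1) p.2 := (Hits_iff _ p.2).2 hv.2
        have hq1 : Hits x (phiG x τ p).1 := by
          rw [Hits_iff]
          rw [phiG, dif_pos hv]
          exact hs.1.1
        have hq2 : Hits (next x (phiG x τ p).1) (phiG x τ p).2 := by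
          rw [Hits_iff, next_eq]
          have : ((phiG x τ p).1.1, (phiG x τ p).2.1) = phiT x τ (p.1.1, p.2.1) := by
            rw [phiG, dif_pos hv]
          rw [show (phiG x τ p).1.1 = (phiT x τ (p.1.1, p.2.1)).1 from congrArg Prod.fst this,
              show (phiG x τ p).2.1 = (phiT x τ (p.1.1, p.2.1)).2 from congrArg Prod.snd this]
          exact hs.1.2
        rw [if_pos hH1, if_pos hH2, if_pos hq1, if_pos hq2]
        have hcomp : ((phiG x τ p).1.1, (phiG x τ p).2.1) = phiT x τ (p.1.1, p.2.1) := by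
          rw [phiG, dif_pos hv]
        have hc1 : (phiG x τ p).1.1 = (phiT x τ (p.1.1, p.2.1)).1 := congrArg Prod.fst hcomp
        have hc2 : (phiG x τ p).2.1 = (phiT x τ (p.1.1, p.2.1)).2 := congrArg Prod.snd hcomp
        have hkey1 : next (next x (phiG x τ p).1) (phiG x τ p).2 = next (next x p.1) p.2 := by
          rw [next_eq, next_eq, next_eq, next_eq, hc1, hc2]
          exact hs.2.1
        have hkey2 : (fun i => m i + Owt τ (phiG x τ p).1 i + Owt τ (phiG x τ p).2 i)
            = fun i => m i + Owt τ p.1 i + Owt τ p.2 i := by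
          funext i
          rw [Owt_eq, Owt_eq, Owt_eq, Owt_eq, hc1, hc2]
          have h5 : owtP τ (phiT x τ (p.1.1, p.2.1)).1 i +
              owtP τ (phiT x τ (p.1.1, p.2.1)).2 i
              = owtP τ p.1.1 i + owtP τ p.2.1 i := hs.2.2.1 i
          omega
        rw [hkey1, hkey2, ← Finsupp.single_add]
        rw [CharTwo.add_self_eq_zero, Finsupp.single_zero]
      · have hH : ¬ (Hits x p.1 ∧ Hits (next x p.1) p.2) := by
          intro ⟨h1, h2⟩
          exact hv ⟨(Hits_iff x p.1).1 h1, (Hits_iff _ p.2).1 h2⟩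
        have hphi : phiG x τ p = p := by rw [phiG, dif_neg hv]
        rw [hphi]
        by_cases h1 : Hits x p.1
        · have h2 : ¬ Hits (next x p.1) p.2 := fun h2 => hH ⟨h1, h2⟩
          rw [if_pos h1, if_neg h2, add_zero]
        · rw [if_neg h1]; simp
    · -- g_ne
      intro p _ hf0
      by_cases hv : validP x (p.1.1, p.2.1)
      · have hs := phiT_spec x τ _ hv
        intro heq
        apply hs.2.2.2.2
        have : ((phiG x τ p).1.1, (phiG x τ p).2.1) = phiT x τ (p.1.1, p.2.1) := by
          rw [phiG, dif_pos hv]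
        rw [← this, heq]
      · exfalso; apply hf0
        have hH : ¬ (Hits x p.1 ∧ Hits (next x p.1) p.2) := by
          intro ⟨h1, h2⟩
          exact hv ⟨(Hits_iff x p.1).1 h1, (Hits_iff _ p.2).1 h2⟩
        by_cases h1 : Hits x p.1
        · have h2 : ¬ Hits (next x p.1) p.2 := fun h2 => hH ⟨h1, h2⟩
          rw [if_pos h1, if_neg h2]
        · rw [if_neg h1]
    · -- g_mem
      intro p _; simp
    · -- g_inv
      intro p _
      by_cases hv : validP x (p.1.1, p.2.1)
      · have hs := phiT_spec x τ _ hv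
        have hcomp : ((phiG x τ p).1.1, (phiG x τ p).2.1) = phiT x τ (p.1.1, p.2.1) := by
          rw [phiG, dif_pos hv]
        have hv2 : validP x ((phiG x τ p).1.1, (phiG x τ p).2.1) := by
          rw [hcomp]; exact hs.1
        rw [phiG, dif_pos hv2]
        have : phiT x τ ((phiG x τ p).1.1, (phiG x τ p).2.1) = (p.1.1, p.2.1) := by
          rw [hcomp]; exact hs.2.2.2.1
        exact Prod.ext (Subtype.ext (congrArg Prod.fst this)) (Subtype.ext (congrArg Prod.snd this))
      · have hin : phiG x τ p = p := by rw [phiG, dif_neg hv]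
        rw [hin]; exact hin
end

section
/- Let Γ be the Cayley graph of the symmetric group S_n with respect to the adjacent transpositions τ₁,...,τ_{n-1}. Define S₀ on the edge of Γ corresponding to the thin rectangle r ∈ Rect(x,y) in the (n-1)×(n-1) square by S₀(r) = (-1)^{I(x, {(x₁,x₂)∈x : x₂ ≤ h(r)})}, where h(r) is the height of the top edge of r. Then S₀ satisfies: (Sq) the product of S₀ over the four edges of any square in Γ (commuting transpositions τ_i, τ_j with |i-j|>1) is -1, and (Hex) the product of S₀ over the six edges of any hexagon in Γ (braid relation τ_iτ_{i+1}τ_i = τ_{i+1}τ_iτ_{i+1}) is +1. -/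
/-!
Write `L(x, h) = (-1)^{I(x, {(x₁,x₂) ∈ x : x₂ ≤ h})}`. Swapping two adjacent columns of a grid
state only changes whether the two swapped points form a dominated pair, so `L(x, h)` changes
sign exactly when the higher of the two swapped heights is at most `h`. Consequently
`S₀(σ, i) = ±L(σ, M)`, where `M` is the top height of the edge and the sign records whether `σ`
is the lower state of the edge. Transporting all factors to the common vertex `σ`, every
`L(σ, ·)` occurs twice along a square or a hexagon, and what remains is a product of the
orientation signs and of the factors `(-1)^{[M ≤ M']}` comparing the levels of the edges: a
finite computation in the relative order of the swapped heights.
-/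

/-- The adjacent transposition `τ_i = (i, i+1)` in the symmetric group on `{0,…,n-1}`. -/
def adjSwap (n : ℕ) (i : ℕ) (h : i + 1 < n) : Equiv.Perm (Fin n) :=
  Equiv.swap ⟨i, Nat.lt_of_succ_lt h⟩ ⟨i + 1, h⟩

/-- `I(x, {(x₁,x₂) ∈ x : x₂ ≤ h})` for the grid state `x` given as the graph of a
permutation: the number of pairs of points of `x`, one strictly dominating the other
in both coordinates, whose upper point has height at most `h`. -/
def IxLe (n : ℕ) (x : Equiv.Perm (Fin n)) (h : ℕ) : ℕ :=
  ((Finset.univ : Finset (Fin n × Fin n)).filter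
    (fun p => p.1 < p.2 ∧ x p.1 < x p.2 ∧ (x p.2).val ≤ h)).card

/-- The sign `S₀` of the edge of the Cayley graph of `S_n` joining `σ` and `σ·τ_i`,
given by the formula `S₀(r) = (-1)^{I(x, {(x₁,x₂) ∈ x : x₂ ≤ h(r)})}`, where `r` is the
corresponding thin rectangle in the `(n-1) × (n-1)` square, `x` is its initial grid
state (the one containing the lower-left corner of `r`), and `h(r)` is the height of
the top edge of `r`. -/
def edgeSign (n : ℕ) (σ : Equiv.Perm (Fin n)) (i : ℕ) (h : i + 1 < n) : ℤ :=
  let a : Fin n := ⟨i, Nat.lt_of_succ_lt h⟩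
  let b : Fin n := ⟨i + 1, h⟩
  let x : Equiv.Perm (Fin n) := if σ a < σ b then σ else σ * adjSwap n i h
  (-1) ^ IxLe n x (max (σ a) (σ b)).val

open Equiv

section
variable {n : ℕ}

lemma adjSwap_apply_left {i : ℕ} (hi : i + 1 < n) :
    adjSwap n i hi ⟨i, Nat.lt_of_succ_lt hi⟩ = ⟨i + 1, hi⟩ :=
  swap_apply_left _ _

lemma adjSwap_apply_right {i : ℕ} (hi : i + 1 < n) :
    adjSwap n i hi ⟨i + 1, hi⟩ = ⟨i, Nat.lt_of_succ_lt hi⟩ :=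
  swap_apply_right _ _

lemma adjSwap_apply_of_ne {i : ℕ} (hi : i + 1 < n) {p : Fin n} (h₁ : p.val ≠ i)
    (h₂ : p.val ≠ i + 1) : adjSwap n i hi p = p :=
  swap_apply_of_ne_of_ne (fun h => h₁ (congrArg Fin.val h)) (fun h => h₂ (congrArg Fin.val h))

lemma adjSwap_adjSwap {i : ℕ} (hi : i + 1 < n) (p : Fin n) :
    adjSwap n i hi (adjSwap n i hi p) = p :=
  swap_apply_self _ _ _

lemma adjSwap_lt_adjSwap_iff {i : ℕ} (hi : i + 1 < n) {p q : Fin n}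
    (h₁ : (p, q) ≠ (⟨i, Nat.lt_of_succ_lt hi⟩, ⟨i + 1, hi⟩))
    (h₂ : (p, q) ≠ (⟨i + 1, hi⟩, ⟨i, Nat.lt_of_succ_lt hi⟩)) :
    adjSwap n i hi p < adjSwap n i hi q ↔ p < q := by
  simp only [adjSwap, swap_apply_def, ne_eq, Prod.mk.injEq, Fin.lt_def] at *
  split_ifs <;> simp only [Fin.ext_iff] at * <;> omega

lemma IxLe_eq_sum (x : Perm (Fin n)) (h : ℕ) :
    (IxLe n x h : ℤ) =
      ∑ p : Fin n × Fin n, if p.1 < p.2 ∧ x p.1 < x p.2 ∧ (x p.2).val ≤ h then 1 else 0 := by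
  simp only [IxLe, Finset.card_filter, Nat.cast_sum, Nat.cast_ite, Nat.cast_one, Nat.cast_zero]

lemma IxLe_mul_adjSwap {i : ℕ} (hi : i + 1 < n) (x : Perm (Fin n)) (h : ℕ) :
    (IxLe n (x * adjSwap n i hi) h : ℤ) = IxLe n x h
      + ((if x ⟨i + 1, hi⟩ < x ⟨i, Nat.lt_of_succ_lt hi⟩
            ∧ (x ⟨i, Nat.lt_of_succ_lt hi⟩).val ≤ h then 1 else 0)
        - (if x ⟨i, Nat.lt_of_succ_lt hi⟩ < x ⟨i + 1, hi⟩
            ∧ (x ⟨i + 1, hi⟩).val ≤ h then 1 else 0)) := by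
  set τ := adjSwap n i hi
  set a : Fin n := ⟨i, Nat.lt_of_succ_lt hi⟩
  set b : Fin n := ⟨i + 1, hi⟩
  have hab : a < b := Fin.mk_lt_mk.2 (Nat.lt_succ_self i)
  -- after reindexing by `τ × τ`, the two sums differ only in the terms at `(b, a)` and `(a, b)`
  rw [IxLe_eq_sum, IxLe_eq_sum, ← (Equiv.prodCongr τ τ).sum_comp, ← sub_eq_iff_eq_add',
    ← Finset.sum_sub_distrib, Fintype.sum_eq_add (b, a) (a, b) (by simp [hab.ne'])]
  · simp [τ, a, b, adjSwap_apply_left, adjSwap_apply_right, hab, hab.not_gt, sub_eq_add_neg]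
  · rintro ⟨p, q⟩ ⟨h₁, h₂⟩
    simp [τ, adjSwap_adjSwap, adjSwap_lt_adjSwap_iff hi h₂ h₁]

end

lemma ite_one_neg_one_mul_self (P : Prop) [Decidable P] :
    (if P then (1 : ℤ) else -1) * (if P then 1 else -1) = 1 := by
  split_ifs <;> norm_num

section
variable {α : Type*} [LinearOrder α]

def stepSign (m h : α) : ℤ := if m ≤ h then -1 else 1

lemma stepSign_self (a : α) : stepSign a a = -1 := if_pos le_rfl

lemma stepSign_mul_stepSign_of_ne {a b : α} (h : a ≠ b) : stepSign a b * stepSign b a = -1 := by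
  rcases h.lt_or_gt with h | h
  · simp [stepSign, h.le, h.not_ge]
  · simp [stepSign, h.le, h.not_ge]

-- The diagonal factors give `(-1)^3`; of the three maxima exactly two coincide (the overall
-- maximum), so the three off-diagonal pairs give `1 · (-1) · (-1)`.
lemma stepSign_prod_max_pairs {u v w : α} (huv : u ≠ v) (huw : u ≠ w) (hvw : v ≠ w) :
    stepSign (max u v) (max u v) * stepSign (max u w) (max u w) * stepSign (max v w) (max v w)
      * (stepSign (max u v) (max u w) * stepSign (max u w) (max u v))
      * (stepSign (max u v) (max v w) * stepSign (max v w) (max u v))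
      * (stepSign (max u w) (max v w) * stepSign (max v w) (max u w)) = -1 := by
  rcases huv.lt_or_gt with h₁ | h₁ <;> rcases huw.lt_or_gt with h₂ | h₂ <;>
    rcases hvw.lt_or_gt with h₃ | h₃ <;>
    first
    | order
    | simp [h₁.le, h₂.le, h₃.le, h₁.ne, h₂.ne, h₃.ne, h₁.ne', h₂.ne', h₃.ne', stepSign_self,
        stepSign_mul_stepSign_of_ne]

lemma ite_lt_mul_ite_gt {a b : α} (h : a ≠ b) :
    (if a < b then (1 : ℤ) else -1) * (if b < a then 1 else -1) = -1 := by
  rcases h.lt_or_gt with h | h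
  · simp [h, h.not_gt]
  · simp [h, h.not_gt]

lemma max_apply_ne_max_apply {β : Type*} {f : β → α} (hf : Function.Injective f)
    {a b c d : β} (hac : a ≠ c) (had : a ≠ d) (hbc : b ≠ c) (hbd : b ≠ d) :
    max (f a) (f b) ≠ max (f c) (f d) := by
  rcases max_choice (f a) (f b) with h | h <;> rcases max_choice (f c) (f d) with h' | h' <;>
    rw [h, h'] <;> exact hf.ne ‹_›

end

section
variable {n : ℕ}

-- the factor `L(x, h)` of the proof sketch above
def levelSign (x : Perm (Fin n)) (h : Fin n) : ℤ := (-1) ^ IxLe n x h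

lemma levelSign_mul_self (x : Perm (Fin n)) (h : Fin n) : levelSign x h * levelSign x h = 1 := by
  rw [levelSign, ← pow_add, Even.neg_one_pow ⟨_, rfl⟩]

lemma levelSign_mul_adjSwap {i : ℕ} (hi : i + 1 < n) (x : Perm (Fin n)) (h : Fin n) :
    levelSign (x * adjSwap n i hi) h
      = stepSign (max (x ⟨i, Nat.lt_of_succ_lt hi⟩) (x ⟨i + 1, hi⟩)) h * levelSign x h := by
  have hne : x ⟨i, Nat.lt_of_succ_lt hi⟩ ≠ x ⟨i + 1, hi⟩ := x.injective.ne (by simp)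
  rw [levelSign, levelSign, ← Int.coe_negOnePow_natCast, ← Int.coe_negOnePow_natCast,
    IxLe_mul_adjSwap hi, Int.negOnePow_add, Units.val_mul, mul_comm]
  congr 1
  rcases hne.lt_or_gt with hlt | hgt
  · simp only [stepSign, hlt, hlt.not_gt, max_eq_right hlt.le, Fin.le_def, false_and, true_and,
      if_false]
    split_ifs <;> rfl
  · simp only [stepSign, hgt, hgt.not_gt, max_eq_left hgt.le, Fin.le_def, false_and, true_and,
      if_false]
    split_ifs <;> rfl

lemma edgeSign_eq {i : ℕ} (σ : Perm (Fin n)) (hi : i + 1 < n) :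
    edgeSign n σ i hi = (if σ ⟨i, Nat.lt_of_succ_lt hi⟩ < σ ⟨i + 1, hi⟩ then 1 else -1)
      * levelSign σ (max (σ ⟨i, Nat.lt_of_succ_lt hi⟩) (σ ⟨i + 1, hi⟩)) := by
  simp only [edgeSign]
  split_ifs
  · exact (one_mul _).symm
  · exact (levelSign_mul_adjSwap hi σ _).trans (by rw [stepSign, if_pos le_rfl])

theorem edgeSign_square (σ : Perm (Fin n)) (i j : ℕ) (hi : i + 1 < n) (hj : j + 1 < n)
    (hij : i + 1 < j) :
    edgeSign n σ i hi * edgeSign n (σ * adjSwap n i hi) j hj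
      * edgeSign n (σ * adjSwap n j hj) i hi * edgeSign n σ j hj = -1 := by
  simp only [edgeSign_eq, levelSign_mul_adjSwap, Perm.mul_apply]
  set a : Fin n := ⟨i, Nat.lt_of_succ_lt hi⟩
  set b : Fin n := ⟨i + 1, hi⟩
  set c : Fin n := ⟨j, Nat.lt_of_succ_lt hj⟩
  set d : Fin n := ⟨j + 1, hj⟩
  have hτc : adjSwap n i hi c = c :=
    adjSwap_apply_of_ne hi (by simp [c]; omega) (by simp [c]; omega)
  have hτd : adjSwap n i hi d = d :=
    adjSwap_apply_of_ne hi (by simp [d]; omega) (by simp [d]; omega)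
  have hτa : adjSwap n j hj a = a :=
    adjSwap_apply_of_ne hj (by simp [a]; omega) (by simp [a]; omega)
  have hτb : adjSwap n j hj b = b :=
    adjSwap_apply_of_ne hj (by simp [b]; omega) (by simp [b]; omega)
  simp only [hτa, hτb, hτc, hτd]
  have hM : max (σ a) (σ b) ≠ max (σ c) (σ d) := by
    refine max_apply_ne_max_apply σ.injective ?_ ?_ ?_ ?_ <;> simp [a, b, c, d] <;> omega
  calc _ = ((if σ a < σ b then 1 else -1) * (if σ a < σ b then 1 else -1))
        * ((if σ c < σ d then 1 else -1) * (if σ c < σ d then 1 else -1))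
        * (levelSign σ (max (σ a) (σ b)) * levelSign σ (max (σ a) (σ b)))
        * (levelSign σ (max (σ c) (σ d)) * levelSign σ (max (σ c) (σ d)))
        * (stepSign (max (σ a) (σ b)) (max (σ c) (σ d))
          * stepSign (max (σ c) (σ d)) (max (σ a) (σ b))) := by ring
    _ = -1 := by
      rw [ite_one_neg_one_mul_self, ite_one_neg_one_mul_self, levelSign_mul_self,
        levelSign_mul_self, stepSign_mul_stepSign_of_ne hM]
      norm_num

theorem edgeSign_hexagon (σ : Perm (Fin n)) (i : ℕ) (hi : i + 1 + 1 < n) :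
    edgeSign n σ i (Nat.lt_of_succ_lt hi)
      * edgeSign n (σ * adjSwap n i (Nat.lt_of_succ_lt hi)) (i + 1) hi
      * edgeSign n (σ * adjSwap n i (Nat.lt_of_succ_lt hi) * adjSwap n (i+1) hi) i
          (Nat.lt_of_succ_lt hi)
      * edgeSign n (σ * adjSwap n i (Nat.lt_of_succ_lt hi) * adjSwap n (i+1) hi
          * adjSwap n i (Nat.lt_of_succ_lt hi)) (i + 1) hi
      * edgeSign n (σ * adjSwap n (i+1) hi * adjSwap n i (Nat.lt_of_succ_lt hi)) i
          (Nat.lt_of_succ_lt hi)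
      * edgeSign n (σ * adjSwap n (i+1) hi) (i + 1) hi = 1 := by
  simp only [edgeSign_eq, levelSign_mul_adjSwap, Perm.mul_apply]
  set hi' := Nat.lt_of_succ_lt hi
  set a : Fin n := ⟨i, Nat.lt_of_succ_lt hi'⟩
  set b : Fin n := ⟨i + 1, hi'⟩
  set c : Fin n := ⟨i + 1 + 1, hi⟩
  have h₁a : adjSwap n i hi' a = b := adjSwap_apply_left hi'
  have h₁b : adjSwap n i hi' b = a := adjSwap_apply_right hi'
  have h₁c : adjSwap n i hi' c = c := adjSwap_apply_of_ne hi' (by simp [c]; omega) (by simp [c])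
  have h₂a : adjSwap n (i + 1) hi a = a := adjSwap_apply_of_ne hi (by simp [a]) (by simp [a]; omega)
  have h₂b : adjSwap n (i + 1) hi b = c := adjSwap_apply_left hi
  have h₂c : adjSwap n (i + 1) hi c = b := adjSwap_apply_right hi
  simp only [h₁a, h₁b, h₁c, h₂a, h₂b, h₂c]
  set u := σ a
  set v := σ b
  set w := σ c
  have huv : u ≠ v := σ.injective.ne (by simp [a, b])
  have huw : u ≠ w := σ.injective.ne (by simp [a, c]; omega)
  have hvw : v ≠ w := σ.injective.ne (by simp [b, c])
  rw [max_comm v u, max_comm w u, max_comm w v]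
  calc _ = ((if u < v then 1 else -1) * (if v < u then 1 else -1))
        * ((if u < w then 1 else -1) * (if w < u then 1 else -1))
        * ((if v < w then 1 else -1) * (if w < v then 1 else -1))
        * (levelSign σ (max u v) * levelSign σ (max u v))
        * (levelSign σ (max u w) * levelSign σ (max u w))
        * (levelSign σ (max v w) * levelSign σ (max v w))
        * (stepSign (max u v) (max u v) * stepSign (max u w) (max u w)
            * stepSign (max v w) (max v w)
          * (stepSign (max u v) (max u w) * stepSign (max u w) (max u v))
          * (stepSign (max u v) (max v w) * stepSign (max v w) (max u v))
          * (stepSign (max u w) (max v w) * stepSign (max v w) (max u w))) := by ring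
    _ = 1 := by
      rw [ite_lt_mul_ite_gt huv, ite_lt_mul_ite_gt huw, ite_lt_mul_ite_gt hvw, levelSign_mul_self,
        levelSign_mul_self, levelSign_mul_self, stepSign_prod_max_pairs huv huw hvw]
      norm_num

end

/-- The sign assignment `S₀` on the Cayley graph of `S_n` satisfies:
(Sq) the product of `S₀` over the four edges of any square (coming from commuting
adjacent transpositions `τ_i`, `τ_j` with `|i-j| > 1`) is `-1`; and
(Hex) the product of `S₀` over the six edges of any hexagon (coming from the braid
relation `τ_i τ_{i+1} τ_i = τ_{i+1} τ_i τ_{i+1}`) is `+1`. -/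
theorem edgeSign_square_hexagon (n : ℕ) :
    (∀ (σ : Equiv.Perm (Fin n)) (i j : ℕ) (hi : i + 1 < n) (hj : j + 1 < n),
      i + 1 < j →
      edgeSign n σ i hi * edgeSign n (σ * adjSwap n i hi) j hj
        * edgeSign n (σ * adjSwap n j hj) i hi * edgeSign n σ j hj = -1) ∧
    (∀ (σ : Equiv.Perm (Fin n)) (i : ℕ) (hi : i + 1 + 1 < n),
      edgeSign n σ i (Nat.lt_of_succ_lt hi)
        * edgeSign n (σ * adjSwap n i (Nat.lt_of_succ_lt hi)) (i + 1) hi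
        * edgeSign n (σ * adjSwap n i (Nat.lt_of_succ_lt hi) * adjSwap n (i+1) hi) i
            (Nat.lt_of_succ_lt hi)
        * edgeSign n (σ * adjSwap n i (Nat.lt_of_succ_lt hi) * adjSwap n (i+1) hi
            * adjSwap n i (Nat.lt_of_succ_lt hi)) (i + 1) hi
        * edgeSign n (σ * adjSwap n (i+1) hi * adjSwap n i (Nat.lt_of_succ_lt hi)) i
            (Nat.lt_of_succ_lt hi)
        * edgeSign n (σ * adjSwap n (i+1) hi) (i + 1) hi = 1) :=
  ⟨edgeSign_square, edgeSign_hexagon⟩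
end

section
/- Any two sign assignments on the Cayley graph of S_n are gauge equivalent: if S₁ and S₂ are two functions from edges of the Cayley graph of S_n (generated by adjacent transpositions) to {±1}, both satisfying the square rule (product -1 around each 4-cycle from commuting generators) and the hexagon rule (product +1 around each 6-cycle from braid relations), then there is a function f : S_n → {±1} with S₁(e) = f(σ)·f(σ')·S₂(e) for every edge e joining σ and σ'. -/
/-- A sign assignment on the Cayley graph of `S_n` (with respect to the adjacent
transpositions): a `{±1}`-valued function on edges (encoded as a function of the
initial vertex `σ` and the generator index `i`, well-defined on undirected edges)
satisfying the square rule (product `-1` around each 4-cycle coming from commuting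
generators) and the hexagon rule (product `+1` around each 6-cycle coming from
braid relations). -/
def IsCayleySign (n : ℕ)
    (S : Equiv.Perm (Fin n) → (i : ℕ) → i + 1 < n → ℤˣ) : Prop :=
  (∀ (σ : Equiv.Perm (Fin n)) (i : ℕ) (hi : i + 1 < n),
      S (σ * adjSwap n i hi) i hi = S σ i hi) ∧
  (∀ (σ : Equiv.Perm (Fin n)) (i j : ℕ) (hi : i + 1 < n) (hj : j + 1 < n),
      i + 1 < j →
      S σ i hi * S (σ * adjSwap n i hi) j hj
        * S (σ * adjSwap n j hj) i hi * S σ j hj = -1) ∧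
  (∀ (σ : Equiv.Perm (Fin n)) (i : ℕ) (hi : i + 1 + 1 < n),
      S σ i (Nat.lt_of_succ_lt hi)
        * S (σ * adjSwap n i (Nat.lt_of_succ_lt hi)) (i + 1) hi
        * S (σ * adjSwap n i (Nat.lt_of_succ_lt hi) * adjSwap n (i+1) hi) i
            (Nat.lt_of_succ_lt hi)
        * S (σ * adjSwap n i (Nat.lt_of_succ_lt hi) * adjSwap n (i+1) hi
            * adjSwap n i (Nat.lt_of_succ_lt hi)) (i + 1) hi
        * S (σ * adjSwap n (i+1) hi * adjSwap n i (Nat.lt_of_succ_lt hi)) i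
            (Nat.lt_of_succ_lt hi)
        * S (σ * adjSwap n (i+1) hi) (i + 1) hi = 1)

def precompMulRight (G A : Type*) [Group G] [Group A] : G →* MulAut (G → A) where
  toFun g :=
    { toFun := fun a x => a (x * g)
      invFun := fun a x => a (x * g⁻¹)
      left_inv := fun a => funext fun x => by simp
      right_inv := fun a => funext fun x => by simp
      map_mul' := fun _ _ => rfl }
  map_one' := by ext; simp
  map_mul' := fun _ _ => by ext; simp [mul_assoc]

@[simp]
theorem precompMulRight_apply {G A : Type*} [Group G] [Group A] (g : G) (a : G → A) (x : G) :
    precompMulRight G A g a x = a (x * g) := rfl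

namespace CoxeterSystem

variable {B W A : Type*} [Group W] [Group A] {M : CoxeterMatrix B} (cs : CoxeterSystem M W)

local prefix:100 "s" => cs.simple

/-- The product of `c` along the closed walk `w, w * s i, w * s i * s i', …` of length
`2 * M i i'` that traces the relator `(s i * s i') ^ M i i'`. -/
def holonomy (c : W → B → A) (w : W) (i i' : B) : A :=
  ((List.range (M i i')).map fun k =>
    c (w * (s i * s i') ^ k) i * c (w * (s i * s i') ^ k * s i) i').prod

theorem exists_eq_inv_mul_of_holonomy_eq_one [LinearOrder B] (c : W → B → A)
    (hc : ∀ w i i', i ≤ i' → cs.holonomy c w i i' = 1) :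
    ∃ f : W → A, ∀ w i, c w i = (f w)⁻¹ * f (w * s i) := by
  let x (i : B) : (W → A) ⋊[precompMulRight W A] W := ⟨fun w => c w i, s i⟩
  have pow_left (i i' : B) (k : ℕ) (w : W) : ((x i * x i') ^ k).left w =
      ((List.range k).map fun k =>
        c (w * (s i * s i') ^ k) i * c (w * (s i * s i') ^ k * s i) i').prod := by
    induction k with
    | zero => rfl
    | succ k ih =>
      have : ((x i * x i') ^ k).right = (s i * s i') ^ k := by
        simpa using map_pow SemidirectProduct.rightHom (x i * x i') k
      rw [pow_succ, SemidirectProduct.mul_left, Pi.mul_apply, ih, this, precompMulRight_apply,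
        List.range_succ, List.map_append, List.prod_append]
      simp [x, SemidirectProduct.mul_left, mul_assoc]
  have hx_rel (i i' : B) (h : i ≤ i') : (x i * x i') ^ M i i' = 1 := by
    refine SemidirectProduct.ext (funext fun w => ?_) ?_
    · rw [pow_left]; exact hc w i i' h
    · simpa [x] using map_pow SemidirectProduct.rightHom (x i * x i') (M i i')
  have hx_sq (i : B) : x i * x i = 1 := by simpa using hx_rel i i le_rfl
  have hx : M.IsLiftable x := by
    intro i i'
    rcases le_total i i' with h | h
    · exact hx_rel i i' h
    -- `x i` is an involution, so `x i * x i'` is the inverse of `x i' * x i`.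
    · rw [← inv_inj, ← inv_pow, mul_inv_rev, inv_eq_of_mul_eq_one_right (hx_sq i),
        inv_eq_of_mul_eq_one_right (hx_sq i'), M.symmetric, inv_one]
      exact hx_rel i' i h
  set ψ := cs.lift ⟨x, hx⟩
  have hψ_right (w : W) : (ψ w).right = w := by
    have : SemidirectProduct.rightHom.comp ψ = MonoidHom.id W :=
      cs.ext_simple fun i => by simp [ψ, x]
    exact DFunLike.congr_fun this w
  refine ⟨fun w => (ψ w).left 1, fun w i => ?_⟩
  dsimp only
  rw [map_mul, SemidirectProduct.mul_left, Pi.mul_apply, precompMulRight_apply, hψ_right]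
  simp [ψ, x]

theorem holonomy_mul {C : Type*} [CommGroup C] (c₁ c₂ : W → B → C) (w : W) (i i' : B) :
    cs.holonomy (c₁ * c₂) w i i' = cs.holonomy c₁ w i i' * cs.holonomy c₂ w i i' := by
  simp only [holonomy, Pi.mul_apply, mul_mul_mul_comm, List.prod_map_mul]

end CoxeterSystem

theorem CoxeterMatrix.A_apply_of_add_one_lt {n : ℕ} {i j : Fin n} (h : (i : ℕ) + 1 < j) :
    CoxeterMatrix.A n i j = 2 := by
  simp only [CoxeterMatrix.A, Matrix.of_apply, Fin.ext_iff]; split_ifs <;> omega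

theorem CoxeterMatrix.A_apply_of_add_one_eq {n : ℕ} {i j : Fin n} (h : (i : ℕ) + 1 = j) :
    CoxeterMatrix.A n i j = 3 := by
  simp only [CoxeterMatrix.A, Matrix.of_apply, Fin.ext_iff]; split_ifs <;> omega

namespace CoxeterSystem

variable {W : Type*} [Group W] {n : ℕ} (cs : CoxeterSystem (CoxeterMatrix.A n) W)

local prefix:100 "s" => cs.simple

theorem simple_mul_simple_comm_of_add_one_lt {i j : Fin n} (h : (i : ℕ) + 1 < j) :
    s i * s j = s j * s i := by
  have := cs.wordProd_braidWord_eq i j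
  rw [braidWord, braidWord, CoxeterMatrix.symmetric _ j i,
    CoxeterMatrix.A_apply_of_add_one_lt h] at this
  simpa [alternatingWord, wordProd] using this

theorem simple_braid_of_add_one_eq {i j : Fin n} (h : (i : ℕ) + 1 = j) :
    s i * s j * s i = s j * s i * s j := by
  have := cs.wordProd_braidWord_eq i j
  rw [braidWord, braidWord, CoxeterMatrix.symmetric _ j i,
    CoxeterMatrix.A_apply_of_add_one_eq h] at this
  simpa [alternatingWord, wordProd, mul_assoc] using this.symm

/-- `cosetRep k = s (n-1) * s (n-2) * ⋯ * s k`; for `k ≤ n` these are representatives of the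
right cosets of the subgroup generated by `s 0, …, s (n-2)`. -/
def cosetRep (k : ℕ) : W :=
  if h : k < n then cosetRep (k + 1) * s ⟨k, h⟩ else 1
termination_by n - k

theorem cosetRep_of_lt {k : ℕ} (h : k < n) :
    cs.cosetRep k = cs.cosetRep (k + 1) * s ⟨k, h⟩ := by
  rw [cosetRep, dif_pos h]

theorem cosetRep_of_le {k : ℕ} (h : n ≤ k) : cs.cosetRep k = 1 := by
  rw [cosetRep, dif_neg (not_lt.mpr h)]

theorem simple_mul_cosetRep {i : Fin n} {k : ℕ} (h : (i : ℕ) + 1 < k) :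
    s i * cs.cosetRep k = cs.cosetRep k * s i := by
  by_cases hk : k < n
  · rw [cs.cosetRep_of_lt hk, ← mul_assoc, simple_mul_cosetRep (k := k + 1) (by omega),
      mul_assoc, cs.simple_mul_simple_comm_of_add_one_lt h, mul_assoc]
  · rw [cs.cosetRep_of_le (not_lt.mp hk), mul_one, one_mul]
termination_by n - k

theorem cosetRep_mul_simple_of_add_one_eq {i j : Fin n} (hij : (i : ℕ) + 1 = j) {k : ℕ}
    (hk : k ≤ i) : cs.cosetRep k * s j = s i * cs.cosetRep k := by
  rcases hk.lt_or_eq with hk | rfl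
  · have hkn : k < n := by omega
    calc cs.cosetRep k * s j = cs.cosetRep (k + 1) * (s ⟨k, hkn⟩ * s j) := by
          rw [cs.cosetRep_of_lt hkn, mul_assoc]
      _ = cs.cosetRep (k + 1) * s j * s ⟨k, hkn⟩ := by
          rw [cs.simple_mul_simple_comm_of_add_one_lt (by simp only; omega), mul_assoc]
      _ = s i * cs.cosetRep k := by
          rw [cosetRep_mul_simple_of_add_one_eq hij (k := k + 1) (by omega), mul_assoc,
            ← cs.cosetRep_of_lt hkn]
  · have hi : cs.cosetRep i = cs.cosetRep (j + 1) * s j * s i := by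
      rw [← cs.cosetRep_of_lt, cs.cosetRep_of_lt i.isLt]
      simp only [hij]
    calc cs.cosetRep i * s j = cs.cosetRep (j + 1) * (s j * s i * s j) := by
          rw [hi]; group
      _ = s i * (cs.cosetRep (j + 1) * s j * s i) := by
          rw [← cs.simple_braid_of_add_one_eq hij, ← mul_assoc, ← mul_assoc,
            ← cs.simple_mul_cosetRep (i := i) (by omega)]
          group
      _ = s i * cs.cosetRep i := by rw [hi]
termination_by n - k

section castSucc

variable {W' : Type*} [Group W'] {m : ℕ} (cs' : CoxeterSystem (CoxeterMatrix.A m) W')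
  (cs : CoxeterSystem (CoxeterMatrix.A (m + 1)) W)

def liftCastSucc : W' →* W :=
  cs'.lift ⟨fun i => cs.simple i.castSucc, fun i j => by
    have : CoxeterMatrix.A (m + 1) i.castSucc j.castSucc = CoxeterMatrix.A m i j := by
      simp [CoxeterMatrix.A]
    rw [← this]
    exact cs.simple_mul_simple_pow _ _⟩

theorem liftCastSucc_simple (i : Fin m) :
    cs'.liftCastSucc cs (cs'.simple i) = cs.simple i.castSucc :=
  cs'.lift_apply_simple _ i

theorem exists_cosetRep_mul_simple {k : ℕ} (hk : k ≤ m + 1) (i : Fin (m + 1)) :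
    ∃ h ∈ (cs'.liftCastSucc cs).range, ∃ k' ≤ m + 1,
      cs.cosetRep k * cs.simple i = h * cs.cosetRep k' := by
  rcases lt_trichotomy ((i : ℕ) + 1) k with hik | hik | hik
  · refine ⟨cs.simple i, ⟨cs'.simple ⟨i, by omega⟩, cs'.liftCastSucc_simple cs _⟩, k, hk, ?_⟩
    exact (cs.simple_mul_cosetRep hik).symm
  · refine ⟨1, one_mem _, i, by omega, ?_⟩
    rw [one_mul, cs.cosetRep_of_lt i.isLt, hik]
  rcases (Nat.lt_succ_iff.mp hik).lt_or_eq with hik | rfl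
  · obtain ⟨j, rfl⟩ : ∃ j : Fin m, j.succ = i := Fin.exists_succ_eq.mpr (by
      rintro rfl; simp at hik)
    refine ⟨cs.simple j.castSucc, ⟨cs'.simple j, cs'.liftCastSucc_simple cs j⟩, k, hk, ?_⟩
    exact cs.cosetRep_mul_simple_of_add_one_eq rfl (by simp at hik ⊢; omega)
  · refine ⟨1, one_mem _, i + 1, i.isLt, ?_⟩
    rw [one_mul, cs.cosetRep_of_lt i.isLt, mul_assoc, cs.simple_mul_simple_self, mul_one]

theorem surjective_liftCastSucc_mul_cosetRep :
    Function.Surjective fun p : W' × Fin (m + 2) =>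
      cs'.liftCastSucc cs p.1 * cs.cosetRep p.2 := by
  intro w
  induction w using cs.simple_induction_right with
  | one => exact ⟨(1, Fin.last (m + 1)), by simp [cs.cosetRep_of_le]⟩
  | mul_simple_right w i hw =>
    obtain ⟨⟨h, k⟩, rfl⟩ := hw
    obtain ⟨_, ⟨h', rfl⟩, k', hk', e⟩ :=
      cs'.exists_cosetRep_mul_simple cs (Nat.lt_succ_iff.mp k.isLt) i
    exact ⟨(h * h', ⟨k', Nat.lt_succ_of_le hk'⟩), by simp [mul_assoc, e]⟩

end castSucc

end CoxeterSystem

theorem CoxeterMatrix.subsingleton_group_A_zero : Subsingleton (CoxeterMatrix.A 0).Group :=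
  ⟨fun v w => by
    have h (u : (CoxeterMatrix.A 0).Group) : u = 1 :=
      (CoxeterMatrix.A 0).toCoxeterSystem.simple_induction_right (p := (· = 1)) u rfl
        fun _ i => i.elim0
    rw [h v, h w]⟩

theorem CoxeterMatrix.finite_group_A : ∀ m : ℕ, Finite (CoxeterMatrix.A m).Group
  | 0 => have := CoxeterMatrix.subsingleton_group_A_zero; inferInstance
  | m + 1 =>
    have := CoxeterMatrix.finite_group_A m
    .of_surjective _ <| (CoxeterMatrix.A m).toCoxeterSystem.surjective_liftCastSucc_mul_cosetRep
      (CoxeterMatrix.A (m + 1)).toCoxeterSystem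

theorem CoxeterMatrix.card_group_A_le (m : ℕ) :
    Nat.card (CoxeterMatrix.A m).Group ≤ (m + 1).factorial := by
  induction m with
  | zero =>
    have := CoxeterMatrix.subsingleton_group_A_zero
    exact Finite.card_le_one_iff_subsingleton.mpr this
  | succ m ih =>
    have := CoxeterMatrix.finite_group_A m
    calc Nat.card (CoxeterMatrix.A (m + 1)).Group
        ≤ Nat.card ((CoxeterMatrix.A m).Group × Fin (m + 2)) :=
          Nat.card_le_card_of_surjective _ <|
            (CoxeterMatrix.A m).toCoxeterSystem.surjective_liftCastSucc_mul_cosetRep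
              (CoxeterMatrix.A (m + 1)).toCoxeterSystem
      _ ≤ (m + 1).factorial * (m + 2) := by
          rw [Nat.card_prod, Nat.card_fin]; exact Nat.mul_le_mul_right _ ih
      _ = (m + 2).factorial := by rw [Nat.factorial_succ (m + 1), mul_comm]

namespace Equiv.Perm

theorem isLiftable_swap_castSucc_succ (m : ℕ) :
    (CoxeterMatrix.A m).IsLiftable fun i : Fin m => swap i.castSucc i.succ := by
  intro i j
  rcases eq_or_ne i j with rfl | hne
  · rw [CoxeterMatrix.diagonal, pow_one, swap_mul_self]
  have three_cycle {a b c : Fin (m + 1)} (hab : a ≠ b) (hac : a ≠ c) (hbc : b ≠ c) :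
      (swap a b * swap b c) ^ 3 = 1 := by
    rw [swap_comm a b, ← (isThreeCycle_swap_mul_swap_same hab.symm hbc hac).orderOf]
    exact pow_orderOf_eq_one _
  simp only [CoxeterMatrix.A, Matrix.of_apply, if_neg hne]
  split_ifs with hadj
  · rcases hadj with h | h
    · have : i.castSucc = j.succ := Fin.ext (by simp [h])
      rw [this, swap_comm _ i.succ, swap_comm j.castSucc]
      exact three_cycle (by simp [Fin.ext_iff]; omega) (by simp [Fin.ext_iff]; omega)
        (by simp [Fin.ext_iff])
    · have : j.castSucc = i.succ := Fin.ext (by simp [h])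
      rw [this]
      exact three_cycle (by simp [Fin.ext_iff]) (by simp [Fin.ext_iff]; omega)
        (by simp [Fin.ext_iff]; omega)
  · have hij : Commute (swap i.castSucc i.succ) (swap j.castSucc j.succ) :=
      (disjoint_swap_swap (by simp [Fin.ext_iff] at hne hadj ⊢; omega)).commute
    rw [hij.mul_pow, sq, sq, swap_mul_self, swap_mul_self, one_mul]

def ofCoxeterA (m : ℕ) : (CoxeterMatrix.A m).Group →* Perm (Fin (m + 1)) :=
  (CoxeterMatrix.A m).toCoxeterSystem.lift ⟨_, isLiftable_swap_castSucc_succ m⟩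

theorem ofCoxeterA_simple (m : ℕ) (i : Fin m) :
    ofCoxeterA m ((CoxeterMatrix.A m).simple i) = swap i.castSucc i.succ :=
  (CoxeterMatrix.A m).toCoxeterSystem.lift_apply_simple _ i

theorem bijective_ofCoxeterA (m : ℕ) : Function.Bijective (ofCoxeterA m) := by
  have := CoxeterMatrix.finite_group_A m
  have hsurj : Function.Surjective (ofCoxeterA m) := by
    rw [← MonoidHom.mrange_eq_top, eq_top_iff, ← mclosure_swap_castSucc_succ,
      Submonoid.closure_le]
    rintro _ ⟨i, rfl⟩
    exact ⟨_, ofCoxeterA_simple m i⟩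
  refine hsurj.bijective_of_nat_card_le ?_
  rw [Nat.card_perm, Nat.card_fin]
  exact CoxeterMatrix.card_group_A_le m

noncomputable def coxeterSystem (m : ℕ) :
    CoxeterSystem (CoxeterMatrix.A m) (Perm (Fin (m + 1))) :=
  ⟨(MulEquiv.ofBijective _ (bijective_ofCoxeterA m)).symm⟩

theorem coxeterSystem_simple (m : ℕ) (i : Fin m) :
    (coxeterSystem m).simple i = swap i.castSucc i.succ :=
  ofCoxeterA_simple m i

end Equiv.Perm

theorem adjSwap_eq_coxeterSystem_simple {m : ℕ} (i : Fin m) :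
    adjSwap (m + 1) i (Nat.succ_lt_succ i.isLt) = (Equiv.Perm.coxeterSystem m).simple i := by
  rw [Equiv.Perm.coxeterSystem_simple]; rfl

namespace IsCayleySign

variable {m : ℕ} {S : Equiv.Perm (Fin (m + 1)) → (i : ℕ) → i + 1 < m + 1 → ℤˣ}

def onSimple (S : Equiv.Perm (Fin (m + 1)) → (i : ℕ) → i + 1 < m + 1 → ℤˣ) :
    Equiv.Perm (Fin (m + 1)) → Fin m → ℤˣ :=
  fun σ i => S σ i (Nat.succ_lt_succ i.isLt)

open Equiv Perm

theorem onSimple_mul_simple_self (hS : IsCayleySign (m + 1) S) (σ : Perm (Fin (m + 1)))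
    (i : Fin m) : onSimple S (σ * (coxeterSystem m).simple i) i = onSimple S σ i := by
  simp only [← adjSwap_eq_coxeterSystem_simple]
  exact hS.1 σ i _

theorem onSimple_square (hS : IsCayleySign (m + 1) S) (σ : Perm (Fin (m + 1)))
    {i j : Fin m} (hij : (i : ℕ) + 1 < j) :
    onSimple S σ i * onSimple S (σ * (coxeterSystem m).simple i) j
      * onSimple S (σ * (coxeterSystem m).simple j) i * onSimple S σ j = -1 := by
  simp only [← adjSwap_eq_coxeterSystem_simple]
  exact hS.2.1 σ i j _ _ hij

theorem onSimple_hexagon (hS : IsCayleySign (m + 1) S) (σ : Perm (Fin (m + 1)))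
    {i j : Fin m} (hij : (i : ℕ) + 1 = j) :
    let s := (coxeterSystem m).simple
    onSimple S σ i * onSimple S (σ * s i) j * onSimple S (σ * s i * s j) i
      * onSimple S (σ * s i * s j * s i) j * onSimple S (σ * s j * s i) i
      * onSimple S (σ * s j) j = 1 := by
  obtain ⟨j, hj⟩ := j
  simp only at hij
  subst hij
  simp only [← adjSwap_eq_coxeterSystem_simple]
  exact hS.2.2 σ i (Nat.succ_lt_succ hj)

theorem holonomy_onSimple (hS : IsCayleySign (m + 1) S) (σ : Perm (Fin (m + 1)))
    {i j : Fin m} (hij : i ≤ j) :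
    (coxeterSystem m).holonomy (onSimple S) σ i j = (-1) ^ (CoxeterMatrix.A m i j + 1) := by
  set s := (coxeterSystem m).simple
  rcases hij.lt_or_eq with hij | rfl
  · rcases Nat.lt_or_eq_of_le (Fin.lt_def.mp hij) with hij | hij
    · have h₁ : σ * (s i * s j) = σ * s j * s i := by
        rw [(coxeterSystem m).simple_mul_simple_comm_of_add_one_lt hij, mul_assoc]
      have h₂ : σ * (s i * s j) * s i = σ * s j := by
        rw [h₁, mul_assoc (σ * s j), (coxeterSystem m).simple_mul_simple_self, mul_one]
      rw [CoxeterSystem.holonomy, CoxeterMatrix.A_apply_of_add_one_lt hij]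
      simp only [List.range_succ, List.range_zero, List.nil_append, List.cons_append,
        List.map_cons, List.map_nil, List.prod_cons, List.prod_nil, pow_zero, pow_one, mul_one]
      rw [h₂, h₁, hS.onSimple_mul_simple_self, hS.onSimple_mul_simple_self, ← mul_assoc,
        hS.onSimple_square σ hij]
      rfl
    · have hb := (coxeterSystem m).simple_braid_of_add_one_eq hij
      have h₁ : σ * (s i * s j * (s i * s j)) = σ * s j * s i := by
        rw [← mul_assoc (s i * s j), hb, mul_assoc (s j * s i),
          (coxeterSystem m).simple_mul_simple_self, mul_one, mul_assoc]
      have h₂ : σ * (s i * s j * (s i * s j)) * s i = σ * s j := by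
        rw [h₁, mul_assoc (σ * s j), (coxeterSystem m).simple_mul_simple_self, mul_one]
      rw [CoxeterSystem.holonomy, CoxeterMatrix.A_apply_of_add_one_eq hij]
      simp only [List.range_succ, List.range_zero, List.nil_append, List.cons_append,
        List.map_cons, List.map_nil, List.prod_cons, List.prod_nil, pow_zero, pow_one, mul_one,
        sq]
      rw [h₂, h₁, show (-1 : ℤˣ) ^ (3 + 1) = 1 by decide]
      simpa only [mul_assoc] using hS.onSimple_hexagon σ hij
  · simp [CoxeterSystem.holonomy, hS.onSimple_mul_simple_self]

end IsCayleySign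

/-- Any two sign assignments on the Cayley graph of `S_n` are gauge equivalent: there
is a function `f : S_n → {±1}` with `S₁(e) = f(σ)·f(σ')·S₂(e)` for every edge `e`
joining `σ` and `σ' = σ·τ_i`. -/
theorem cayleySign_unique (n : ℕ)
    (S₁ S₂ : Equiv.Perm (Fin n) → (i : ℕ) → i + 1 < n → ℤˣ)
    (h₁ : IsCayleySign n S₁) (h₂ : IsCayleySign n S₂) :
    ∃ f : Equiv.Perm (Fin n) → ℤˣ,
      ∀ (σ : Equiv.Perm (Fin n)) (i : ℕ) (hi : i + 1 < n),
        S₁ σ i hi = f σ * f (σ * adjSwap n i hi) * S₂ σ i hi := by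
  cases n with
  | zero => exact ⟨1, fun _ _ hi => absurd hi (by omega)⟩
  | succ m =>
    obtain ⟨f, hf⟩ := (Equiv.Perm.coxeterSystem m).exists_eq_inv_mul_of_holonomy_eq_one
      (IsCayleySign.onSimple S₁ * IsCayleySign.onSimple S₂) fun σ i j hij => by
        rw [CoxeterSystem.holonomy_mul, h₁.holonomy_onSimple σ hij, h₂.holonomy_onSimple σ hij,
          Int.units_mul_self]
    refine ⟨f, fun σ i hi => ?_⟩
    have hratio : S₁ σ i hi * S₂ σ i hi = f σ * f (σ * adjSwap (m + 1) i hi) := by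
      rw [adjSwap_eq_coxeterSystem_simple ⟨i, by omega⟩, ← Int.units_inv_eq_self (f σ)]
      exact hf σ ⟨i, by omega⟩
    rw [← hratio, mul_assoc, Int.units_mul_self, mul_one]
end
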